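/- arXiv:2006.13481 — 6 statements merged into one kernel-verified Lean document; each statement's English description precedes it below -/
import Mathlib

section
/- Let M = (M, <, ...) be a definably complete expansion of a dense linear order without endpoints. Then the following are equivalent: (1) M is a locally o-minimal structure; (2) every definable subset of M either has a nonempty interior or is closed and discrete. -/
open FirstOrder Set

/-- A subset of a topological space is discrete: every point of it is isolated in it. -/
def DiscreteIn {α : Type*} [TopologicalSpace α] (S : Set α) : Prop :=
  ∀ x ∈ S, ∃ U : Set α, IsOpen U ∧ U ∩ S = {x}

/-- A set is constructible if it is a finite boolean combination of open sets. -/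
inductive IsConstructibleSet {α : Type*} [TopologicalSpace α] : Set α → Prop
  | of_isOpen : ∀ s : Set α, IsOpen s → IsConstructibleSet s
  | compl : ∀ s : Set α, IsConstructibleSet s → IsConstructibleSet sᶜ
  | union : ∀ s t : Set α, IsConstructibleSet s → IsConstructibleSet t →
      IsConstructibleSet (s ∪ t)

variable (L : FirstOrder.Language) (M : Type*) [L.Structure M] [Nonempty M] [LinearOrder M]
  [DenselyOrdered M] [NoMinOrder M] [NoMaxOrder M] [TopologicalSpace M] [OrderTopology M]

/-- The language contains `<`, interpreted as the order: the order relation is definable. -/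
def OrderDefinable : Prop :=
  (univ : Set M).Definable L {p : Fin 2 → M | p 0 < p 1}

/-- `M` is locally o-minimal: every definable subset of `M` is, near each point,
a finite union of points and open intervals. -/
def IsLocallyOMinimal : Prop :=
  ∀ X : Set M, (univ : Set M).Definable₁ L X → ∀ a : M,
    ∃ b c : M, b < a ∧ a < c ∧
      ∃ (P : Finset M) (I : Finset (M × M)),
        X ∩ Set.Ioo b c = ↑P ∪ ⋃ p ∈ I, Set.Ioo p.1 p.2

/-- `M` is definably complete: every nonempty definable subset of `M` has a supremum and
an infimum in `M ∪ {±∞}`; equivalently it has a least upper bound (resp. greatest lower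
bound) in `M` whenever it is bounded above (resp. below). -/
def IsDefinablyComplete : Prop :=
  ∀ X : Set M, (univ : Set M).Definable₁ L X → X.Nonempty →
    (BddAbove X → ∃ a, IsLUB X a) ∧ (BddBelow X → ∃ a, IsGLB X a)

/-- Property (a): images of nonempty definable discrete sets under coordinate projections
are discrete. -/
def PropertyA : Prop :=
  ∀ (n d : ℕ) (X : Set (Fin n → M)) (σ : Fin d → Fin n),
    Function.Injective σ → (univ : Set M).Definable L X → X.Nonempty →
    DiscreteIn X → DiscreteIn ((fun v => v ∘ σ) '' X)

/-- Property (b). -/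
def PropertyB : Prop :=
  ∀ (m : ℕ) (X₁ X₂ : Set (Fin m → M)),
    (univ : Set M).Definable L X₁ → (univ : Set M).Definable L X₂ →
    (interior (X₁ ∪ X₂)).Nonempty →
    (interior X₁).Nonempty ∨ (interior X₂).Nonempty

/-- A map is definable on a set `A` if its graph over `A` is a definable set. -/
def DefinableMapOn {α β : Type} (A : Set (α → M)) (f : (α → M) → (β → M)) : Prop :=
  (univ : Set M).Definable L
    {p : α ⊕ β → M | (p ∘ Sum.inl) ∈ A ∧ p ∘ Sum.inr = f (p ∘ Sum.inl)}

/-- Property (c). -/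
def PropertyC : Prop :=
  ∀ (m n : ℕ) (A : Set (Fin m → M)) (f : (Fin m → M) → (Fin n → M)),
    (univ : Set M).Definable L A → (interior A).Nonempty →
    DefinableMapOn L M A f →
    ∃ U : Set (Fin m → M), (univ : Set M).Definable L U ∧ IsOpen U ∧ U.Nonempty ∧
      U ⊆ A ∧ ContinuousOn f U

/-- Property (d): definable choice for definable sets with discrete fibers over a
coordinate projection. -/
def PropertyD : Prop :=
  ∀ (n d : ℕ) (X : Set (Fin n → M)) (σ : Fin d → Fin n),
    Function.Injective σ → (univ : Set M).Definable L X →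
    (∀ x ∈ (fun v => v ∘ σ) '' X, DiscreteIn (X ∩ (fun v => v ∘ σ) ⁻¹' {x})) →
    ∃ τ : (Fin d → M) → (Fin n → M),
      DefinableMapOn L M ((fun v => v ∘ σ) '' X) τ ∧
      ∀ x ∈ (fun v => v ∘ σ) '' X, τ x ∈ X ∧ τ x ∘ σ = x

-- The dimension of a definable set: the maximal `d` such that some coordinate projection
-- onto `M^d` has image with nonempty interior; `⊥` for the empty set.
open Classical in
noncomputable def ddim {M : Type*} [TopologicalSpace M] {n : ℕ} (X : Set (Fin n → M)) :
    WithBot ℕ :=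
  if X = ∅ then ⊥
  else ↑(sSup {e : ℕ | ∃ σ : Fin e → Fin n, Function.Injective σ ∧
      (interior ((fun v => v ∘ σ) '' X)).Nonempty})

/-- Strong local monotonicity property. -/
def StrongLocalMonotonicity : Prop :=
  ∀ a b : M, a < b → ∀ f : M → M,
    (univ : Set M).Definable L {p : Fin 2 → M | p 0 ∈ Set.Ioo a b ∧ p 1 = f (p 0)} →
    ∃ Xd Xc Xp Xm : Set M,
      (univ : Set M).Definable₁ L Xd ∧ (univ : Set M).Definable₁ L Xc ∧
      (univ : Set M).Definable₁ L Xp ∧ (univ : Set M).Definable₁ L Xm ∧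
      Set.Ioo a b = Xd ∪ Xc ∪ Xp ∪ Xm ∧
      Disjoint Xd Xc ∧ Disjoint Xd Xp ∧ Disjoint Xd Xm ∧
      Disjoint Xc Xp ∧ Disjoint Xc Xm ∧ Disjoint Xp Xm ∧
      DiscreteIn Xd ∧ (∀ x ∈ Set.Ioo a b, x ∈ closure Xd → x ∈ Xd) ∧
      IsOpen Xc ∧ (∀ x ∈ Xc, ∃ U : Set M, IsOpen U ∧ x ∈ U ∧ U ⊆ Xc ∧
        ∀ y ∈ U, f y = f x) ∧
      IsOpen Xp ∧ (∀ x ∈ Xp, ∃ U : Set M, IsOpen U ∧ x ∈ U ∧ U ⊆ Xp ∧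
        StrictMonoOn f U ∧ ContinuousOn f U) ∧
      IsOpen Xm ∧ (∀ x ∈ Xm, ∃ U : Set M, IsOpen U ∧ x ∈ U ∧ U ⊆ Xm ∧
        StrictAntiOn f U ∧ ContinuousOn f U)

/-- Type completeness: for every `a ∈ M ∪ {±∞}`, the types `a⁺` and `a⁻` are complete. -/
def TypeComplete : Prop :=
  ∀ Y : Set M, (univ : Set M).Definable₁ L Y →
    (∀ a : M, (∃ b, a < b ∧ Set.Ioo a b ⊆ Y) ∨ (∃ b, a < b ∧ Set.Ioo a b ∩ Y = ∅)) ∧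
    ((∃ b : M, Set.Iio b ⊆ Y) ∨ (∃ b : M, Set.Iio b ∩ Y = ∅)) ∧
    (∀ a : M, (∃ b, b < a ∧ Set.Ioo b a ⊆ Y) ∨ (∃ b, b < a ∧ Set.Ioo b a ∩ Y = ∅)) ∧
    ((∃ b : M, Set.Ioi b ⊆ Y) ∨ (∃ b : M, Set.Ioi b ∩ Y = ∅))


section AuxSection
open FirstOrder Set FirstOrder.Language

namespace Stmt0Aux
variable {L : FirstOrder.Language} {M : Type*} [L.Structure M] {α k : Type*}

lemma dconst (i : α) (c : M) : (univ : Set M).Definable L {x : α → M | x i = c} :=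
  ⟨Term.equal (var i) ((L.con (⟨c, mem_univ c⟩ : (univ : Set M))).term), by
    ext v
    simp [Formula.realize_equal, Term.realize_con]⟩

lemma dexists [Finite α] [Finite k] {s : Set ((α ⊕ k) → M)}
    (h : (univ : Set M).Definable L s) :
    (univ : Set M).Definable L {x : α → M | ∃ c : k → M, Sum.elim x c ∈ s} := by
  have him := h.image_comp Sum.inl
  convert him using 1
  ext x
  simp only [mem_setOf_eq, mem_image]
  constructor
  · rintro ⟨c, hc⟩
    exact ⟨Sum.elim x c, hc, funext fun a => rfl⟩
  · rintro ⟨g, hg, rfl⟩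
    refine ⟨g ∘ Sum.inr, ?_⟩
    rwa [Sum.elim_comp_inl_inr]

lemma dforall [Finite α] [Finite k] {s : Set ((α ⊕ k) → M)}
    (h : (univ : Set M).Definable L s) :
    (univ : Set M).Definable L {x : α → M | ∀ c : k → M, Sum.elim x c ∈ s} := by
  have := (dexists h.compl).compl
  convert this using 1
  ext x
  simp

lemma dsubst [Finite α] [Finite k] {s : Set ((α ⊕ k) → M)}
    (h : (univ : Set M).Definable L s) (c : k → M) :
    (univ : Set M).Definable L {x : α → M | Sum.elim x c ∈ s} := by
  classical
  cases nonempty_fintype k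
  have hd : (univ : Set M).Definable L
      (s ∩ ⋂ j ∈ (Finset.univ : Finset k), {g : (α ⊕ k) → M | g (Sum.inr j) = c j}) :=
    h.inter (definable_biInter_finset (fun j => dconst (Sum.inr j) (c j)) _)
  have := dexists hd
  convert this using 1
  ext x
  simp only [mem_setOf_eq, mem_inter_iff, mem_iInter, Finset.mem_univ, forall_const]
  constructor
  · intro hx
    exact ⟨c, hx, fun j => rfl⟩
  · rintro ⟨c', hc', hcc⟩
    have : c' = c := funext hcc
    rwa [this] at hc'

end Stmt0Aux

namespace Stmt0Aux
section Order
set_option linter.unusedSectionVars false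
variable {L : FirstOrder.Language} {M : Type*} [L.Structure M] [LinearOrder M] {α : Type*}
variable (hlt : (univ : Set M).Definable L {p : Fin 2 → M | p 0 < p 1})

include hlt

lemma dlt (i j : α) : (univ : Set M).Definable L {x : α → M | x i < x j} := by
  have := hlt.preimage_comp (![i, j] : Fin 2 → α)
  convert this using 1
  ext x
  simp


lemma dlt_const [Finite α] (i : α) (c : M) :
    (univ : Set M).Definable L {x : α → M | x i < c} := by
  have := dsubst (dlt hlt (Sum.inl i : α ⊕ Fin 1) (Sum.inr 0)) (fun _ => c)
  exact this

lemma dconst_lt [Finite α] (i : α) (c : M) :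
    (univ : Set M).Definable L {x : α → M | c < x i} := by
  have := dsubst (dlt hlt (Sum.inr 0 : α ⊕ Fin 1) (Sum.inl i)) (fun _ => c)
  exact this

lemma dle (i j : α) : (univ : Set M).Definable L {x : α → M | x i ≤ x j} := by
  have := (dlt hlt j i).compl
  convert this using 1
  ext x
  simp

lemma dle_const [Finite α] (i : α) (c : M) :
    (univ : Set M).Definable L {x : α → M | x i ≤ c} := by
  have := dsubst (dle hlt (Sum.inl i : α ⊕ Fin 1) (Sum.inr 0)) (fun _ => c)
  exact this

lemma dconst_le [Finite α] (i : α) (c : M) :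
    (univ : Set M).Definable L {x : α → M | c ≤ x i} := by
  have := dsubst (dle hlt (Sum.inr 0 : α ⊕ Fin 1) (Sum.inl i)) (fun _ => c)
  exact this

omit hlt

lemma dmem (i : α) {X : Set M} (hX : (univ : Set M).Definable₁ L X) :
    (univ : Set M).Definable L {x : α → M | x i ∈ X} := by
  have := hX.preimage_comp (fun _ : Fin 1 => i)
  exact this

include hlt

lemma dIoo (u v : M) : (univ : Set M).Definable₁ L (Ioo u v) := by
  have := (dconst_lt hlt (0 : Fin 1) u).inter (dlt_const hlt (0 : Fin 1) v)
  unfold Set.Definable₁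
  convert this using 1
  rfl

end Order
end Stmt0Aux

namespace Stmt0Aux
section Top
set_option linter.unusedSectionVars false
variable {L : FirstOrder.Language} {M : Type*} [L.Structure M] [LinearOrder M]
  [DenselyOrdered M] [NoMinOrder M] [NoMaxOrder M] [TopologicalSpace M] [OrderTopology M]
variable (hlt : (univ : Set M).Definable L {p : Fin 2 → M | p 0 < p 1})

lemma d1compl {X : Set M} (hX : (univ : Set M).Definable₁ L X) :
    (univ : Set M).Definable₁ L Xᶜ := by
  have := hX.compl
  unfold Set.Definable₁
  convert this using 1
  rfl

lemma d1inter {X Y : Set M} (hX : (univ : Set M).Definable₁ L X)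
    (hY : (univ : Set M).Definable₁ L Y) : (univ : Set M).Definable₁ L (X ∩ Y) := by
  have := hX.inter hY
  unfold Set.Definable₁
  convert this using 1
  rfl

lemma d1union {X Y : Set M} (hX : (univ : Set M).Definable₁ L X)
    (hY : (univ : Set M).Definable₁ L Y) : (univ : Set M).Definable₁ L (X ∪ Y) := by
  have := hX.union hY
  unfold Set.Definable₁
  convert this using 1
  rfl

lemma interior_eq_def (X : Set M) :
    interior X = {a | ∃ l u : M, l < a ∧ a < u ∧ ∀ y, l < y → y < u → y ∈ X} := by
  ext a
  constructor
  · intro hx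
    obtain ⟨l, u, hmem, hsub⟩ := mem_nhds_iff_exists_Ioo_subset.1 (mem_interior_iff_mem_nhds.1 hx)
    exact ⟨l, u, hmem.1, hmem.2, fun y h1 h2 => hsub ⟨h1, h2⟩⟩
  · rintro ⟨l, u, h1, h2, h3⟩
    exact mem_interior.2 ⟨Ioo l u, fun t ht => h3 t ht.1 ht.2, isOpen_Ioo, ⟨h1, h2⟩⟩

include hlt

lemma dInterior {X : Set M} (hX : (univ : Set M).Definable₁ L X) :
    (univ : Set M).Definable₁ L (interior X) := by
  classical
  set good : Set ((Fin 1 ⊕ (Fin 1 ⊕ Fin 1)) ⊕ Fin 1 → M) :=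
    ({h | h (Sum.inl (Sum.inr (Sum.inl 0))) < h (Sum.inr 0)} ∩
      ({h | h (Sum.inr 0) < h (Sum.inl (Sum.inr (Sum.inr 0)))} ∩
        {h | h (Sum.inr 0) ∈ X}ᶜ))ᶜ with hgood
  have dgood : (univ : Set M).Definable L good :=
    ((dlt hlt _ _).inter ((dlt hlt _ _).inter (dmem _ hX).compl)).compl
  set inner : Set ((Fin 1 ⊕ (Fin 1 ⊕ Fin 1)) → M) :=
    {g | g (Sum.inr (Sum.inl 0)) < g (Sum.inl 0)} ∩
      ({g | g (Sum.inl 0) < g (Sum.inr (Sum.inr 0))} ∩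
        {g | ∀ c : Fin 1 → M, Sum.elim g c ∈ good}) with hinner
  have dinner : (univ : Set M).Definable L inner :=
    (dlt hlt _ _).inter ((dlt hlt _ _).inter (dforall dgood))
  show (univ : Set M).Definable L {x : Fin 1 → M | x 0 ∈ interior X}
  have := dexists dinner
  convert this using 1
  ext x
  simp only [hinner, hgood, mem_setOf_eq, mem_inter_iff, mem_compl_iff, Sum.elim_inl,
    Sum.elim_inr, interior_eq_def, not_and, not_not]
  constructor
  · rintro ⟨l, u, h1, h2, h3⟩
    exact ⟨Sum.elim (fun _ => l) (fun _ => u), h1, h2, fun c hc1 hc2 => h3 _ hc1 hc2⟩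
  · rintro ⟨c, h1, h2, h3⟩
    exact ⟨c (Sum.inl 0), c (Sum.inr 0), h1, h2, fun y hy1 hy2 => h3 (fun _ => y) hy1 hy2⟩

lemma dS (p q : M) {Y : Set M} (hY : (univ : Set M).Definable₁ L Y) :
    (univ : Set M).Definable₁ L
      {x : M | p ≤ x ∧ x ≤ q ∧ ∀ y, p ≤ y → y ≤ x → y ∈ Y} := by
  classical
  set good : Set (Fin 1 ⊕ Fin 1 → M) :=
    ({h | p ≤ h (Sum.inr 0)} ∩ ({h | h (Sum.inr 0) ≤ h (Sum.inl 0)} ∩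
      {h | h (Sum.inr 0) ∈ Y}ᶜ))ᶜ with hgood
  have dgood : (univ : Set M).Definable L good :=
    ((dconst_le hlt _ p).inter ((dle hlt _ _).inter (dmem _ hY).compl)).compl
  have dall : (univ : Set M).Definable L
      ({x : Fin 1 → M | p ≤ x 0} ∩ ({x | x 0 ≤ q} ∩
        {x | ∀ c : Fin 1 → M, Sum.elim x c ∈ good})) :=
    (dconst_le hlt _ p).inter ((dle_const hlt _ q).inter (dforall dgood))
  show (univ : Set M).Definable L
      {x : Fin 1 → M | x 0 ∈ {x : M | p ≤ x ∧ x ≤ q ∧ ∀ y, p ≤ y → y ≤ x → y ∈ Y}}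
  convert dall using 1
  ext x
  simp only [hgood, mem_setOf_eq, mem_inter_iff, mem_compl_iff, Sum.elim_inl, Sum.elim_inr,
    not_and, not_not]
  constructor
  · rintro ⟨h1, h2, h3⟩
    exact ⟨h1, h2, fun c hc1 hc2 => h3 _ hc1 hc2⟩
  · rintro ⟨h1, h2, h3⟩
    exact ⟨h1, h2, fun y hy1 hy2 => h3 (fun _ => y) hy1 hy2⟩

end Top
end Stmt0Aux

namespace Stmt0Aux
section Main
set_option linter.unusedSectionVars false
variable {L : FirstOrder.Language} {M : Type*} [L.Structure M] [LinearOrder M]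
  [DenselyOrdered M] [NoMinOrder M] [NoMaxOrder M] [TopologicalSpace M] [OrderTopology M]
variable (hlt : (univ : Set M).Definable L {p : Fin 2 → M | p 0 < p 1})
  (hdc : ∀ X : Set M, (univ : Set M).Definable₁ L X → X.Nonempty →
    (BddAbove X → ∃ a, IsLUB X a) ∧ (BddBelow X → ∃ a, IsGLB X a))

include hlt hdc

lemma conn_core {Y Z : Set M} (hYd : (univ : Set M).Definable₁ L Y) (hYo : IsOpen Y)
    (hZo : IsOpen Z) (hdisj : ∀ x, x ∈ Y → x ∈ Z → False) {q p : M} (hqp : q < p)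
    (hq : q ∈ Y) (hp : p ∈ Z) (hsub : Icc q p ⊆ Y ∪ Z) : False := by
  set S := {x : M | q ≤ x ∧ x ≤ p ∧ ∀ y, q ≤ y → y ≤ x → y ∈ Y} with hSdef
  have hdS := dS hlt q p hYd
  have hqS : q ∈ S := ⟨le_refl q, hqp.le, fun y h1 h2 => by rwa [le_antisymm h2 h1]⟩
  obtain ⟨s, hs⟩ := (hdc S hdS ⟨q, hqS⟩).1 ⟨p, fun x hx => hx.2.1⟩
  have hqs : q ≤ s := hs.1 hqS
  have hsp : s ≤ p := hs.2 (fun x hx => hx.2.1)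
  have hIco : ∀ y, q ≤ y → y < s → y ∈ Y := by
    intro y h1 h2
    obtain ⟨x', hx'S, hyx'⟩ : ∃ x' ∈ S, y < x' := by
      by_contra h
      push_neg at h
      exact absurd (hs.2 h) h2.not_ge
    exact hx'S.2.2 y h1 hyx'.le
  rcases hsub ⟨hqs, hsp⟩ with hsY | hsZ
  · obtain ⟨l, u, hm, hsub'⟩ := mem_nhds_iff_exists_Ioo_subset.1 (hYo.mem_nhds hsY)
    have hsltp : s < p := lt_of_le_of_ne hsp (fun e => hdisj p (e ▸ hsY) hp)
    obtain ⟨t, ht1, ht2⟩ := exists_between (lt_min hm.2 hsltp)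
    have htS : t ∈ S := by
      refine ⟨hqs.trans ht1.le, (ht2.trans_le (min_le_right _ _)).le, fun y h1 h2 => ?_⟩
      rcases lt_or_ge y s with h | h
      · exact hIco y h1 h
      · exact hsub' ⟨lt_of_lt_of_le hm.1 h, lt_of_le_of_lt h2 (ht2.trans_le (min_le_left _ _))⟩
    exact absurd (hs.1 htS) ht1.not_ge
  · obtain ⟨l, u, hm, hsub'⟩ := mem_nhds_iff_exists_Ioo_subset.1 (hZo.mem_nhds hsZ)
    have hqlts : q < s := lt_of_le_of_ne hqs (fun e => hdisj q hq (e ▸ hsZ))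
    obtain ⟨y, hy1, hy2⟩ := exists_between (max_lt hm.1 hqlts)
    exact hdisj y (hIco y ((le_max_right l q).trans hy1.le) hy2)
      (hsub' ⟨(le_max_left l q).trans_lt hy1, hy2.trans hm.2⟩)

lemma conn {Y Z : Set M} (hYd : (univ : Set M).Definable₁ L Y)
    (hZd : (univ : Set M).Definable₁ L Z) (hYo : IsOpen Y) (hZo : IsOpen Z)
    (hdisj : ∀ x, x ∈ Y → x ∈ Z → False) {u v : M} (hsub : Ioo u v ⊆ Y ∪ Z) :
    Ioo u v ⊆ Y ∨ Ioo u v ⊆ Z := by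
  by_contra h
  rw [not_or, Set.not_subset, Set.not_subset] at h
  obtain ⟨⟨x1, hx1, hx1Y⟩, ⟨x2, hx2, hx2Z⟩⟩ := h
  have hx1Z : x1 ∈ Z := (hsub hx1).resolve_left hx1Y
  have hx2Y : x2 ∈ Y := (hsub hx2).resolve_right hx2Z
  have hIcc : ∀ a b : M, a ∈ Ioo u v → b ∈ Ioo u v → Icc a b ⊆ Y ∪ Z := by
    intro a b ha hb x hx
    exact hsub ⟨ha.1.trans_le hx.1, hx.2.trans_lt hb.2⟩
  rcases lt_trichotomy x2 x1 with hlt' | heq | hlt'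
  · exact absurd (conn_core hlt hdc hYd hYo hZo hdisj hlt' hx2Y hx1Z (hIcc _ _ hx2 hx1)) id
  · exact hdisj x1 (heq ▸ hx2Y) hx1Z
  · exact absurd (conn_core hlt hdc hZd hZo hYo (fun x h1 h2 => hdisj x h2 h1) hlt' hx1Z hx2Y
      (fun x hx => ((hIcc _ _ hx1 hx2) hx).symm)) id
end Main
end Stmt0Aux

end AuxSection


theorem stmt0 (hlt : OrderDefinable L M) (hdc : IsDefinablyComplete L M) :
    IsLocallyOMinimal L M ↔
      ∀ X : Set M, (univ : Set M).Definable₁ L X →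
        (interior X).Nonempty ∨ (IsClosed X ∧ DiscreteIn X) := by
  classical
  have hlt' : (univ : Set M).Definable L {p : Fin 2 → M | p 0 < p 1} := hlt
  constructor
  · intro hlo X hX
    by_cases hint : (interior X).Nonempty
    · exact Or.inl hint
    right
    have hfin : ∀ a : M, ∃ b c : M, b < a ∧ a < c ∧ (X ∩ Set.Ioo b c).Finite := by
      intro a
      obtain ⟨b, c, hb, hc, P, I, heq⟩ := hlo X hX a
      refine ⟨b, c, hb, hc, ?_⟩
      have hIe : ∀ p ∈ I, Set.Ioo p.1 p.2 = (∅ : Set M) := by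
        intro p hp
        by_contra hne
        obtain ⟨t, ht⟩ := Set.nonempty_iff_ne_empty.2 hne
        refine hint ⟨t, ?_⟩
        have hsub : Set.Ioo p.1 p.2 ⊆ X := by
          intro y hy
          have : y ∈ X ∩ Set.Ioo b c := by
            rw [heq]
            exact Or.inr (Set.mem_biUnion hp hy)
          exact this.1
        exact (isOpen_Ioo.subset_interior_iff.2 hsub) ht
      rw [heq]
      refine P.finite_toSet.union (Set.Finite.biUnion I.finite_toSet fun p hp => ?_)
      rw [hIe p hp]
      exact Set.finite_empty
    constructor
    · rw [← isOpen_compl_iff, isOpen_iff_forall_mem_open]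
      intro a ha
      obtain ⟨b, c, hb, hc, hf⟩ := hfin a
      refine ⟨Set.Ioo b c ∩ (X ∩ Set.Ioo b c)ᶜ, ?_,
        isOpen_Ioo.inter hf.isClosed.isOpen_compl, ⟨⟨hb, hc⟩, fun hx => ha hx.1⟩⟩
      intro x hx hxX
      exact hx.2 ⟨hxX, hx.1⟩
    · intro a haX
      obtain ⟨b, c, hb, hc, hf⟩ := hfin a
      refine ⟨Set.Ioo b c ∩ ((X ∩ Set.Ioo b c) \ {a})ᶜ,
        isOpen_Ioo.inter (hf.subset Set.diff_subset).isClosed.isOpen_compl, ?_⟩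
      ext x
      constructor
      · rintro ⟨⟨hx1, hx2⟩, hxX⟩
        by_contra hxa
        exact hx2 ⟨⟨hxX, hx1⟩, hxa⟩
      · rintro rfl
        exact ⟨⟨⟨hb, hc⟩, fun hd => hd.2 rfl⟩, haX⟩
  · intro hdich X hX a
    have hXc : (univ : Set M).Definable₁ L Xᶜ := Stmt0Aux.d1compl hX
    set Y := interior X with hYdef
    set Z := interior Xᶜ with hZdef
    have hYd := Stmt0Aux.dInterior hlt' hX
    have hZd := Stmt0Aux.dInterior hlt' hXc
    have hdisj : ∀ x, x ∈ Y → x ∈ Z → False := fun x h1 h2 =>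
      (interior_subset h2 : x ∈ Xᶜ) (interior_subset h1)
    set D := (Y ∪ Z)ᶜ with hDdef
    have hDd : (univ : Set M).Definable₁ L D :=
      Stmt0Aux.d1compl (Stmt0Aux.d1union hYd hZd)
    have nodense : ∀ S : Set M, DiscreteIn S → ∀ w' v' : M, w' < v' →
        Set.Ioo w' v' ⊆ S → False := by
      intro S hS w' v' hwv hsub
      obtain ⟨z, hz⟩ := exists_between hwv
      obtain ⟨U, hUo, hUS⟩ := hS z (hsub hz)
      have hzU : z ∈ U := by
        have : z ∈ U ∩ S := hUS.symm ▸ Set.mem_singleton z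
        exact this.1
      obtain ⟨l, u', hz', hsub'⟩ := mem_nhds_iff_exists_Ioo_subset.1
        ((hUo.inter isOpen_Ioo).mem_nhds ⟨hzU, hz⟩)
      obtain ⟨z2, hz21, hz22⟩ := exists_between hz'.2
      have hz2m : z2 ∈ U ∩ Set.Ioo w' v' := hsub' ⟨hz'.1.trans hz21, hz22⟩
      have hmem : z2 ∈ U ∩ S := ⟨hz2m.1, hsub hz2m.2⟩
      rw [hUS] at hmem
      exact absurd (Set.mem_singleton_iff.1 hmem) hz21.ne'
    have hDint : interior D = ∅ := by
      by_contra hne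
      obtain ⟨w, hw⟩ := Set.nonempty_iff_ne_empty.2 hne
      obtain ⟨u, v, hwm, hsubD⟩ := mem_nhds_iff_exists_Ioo_subset.1
        (mem_interior_iff_mem_nhds.1 hw)
      have hS1d : DiscreteIn (X ∩ Set.Ioo u v) := by
        rcases hdich (X ∩ Set.Ioo u v) (Stmt0Aux.d1inter hX (Stmt0Aux.dIoo hlt' u v)) with
          hI | hCD
        · obtain ⟨t, ht⟩ := hI
          have h1 : t ∈ Y := interior_mono Set.inter_subset_left ht
          exact absurd (Or.inl h1) (hsubD (interior_subset ht).2)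
        · exact hCD.2
      have hS2d : DiscreteIn (Xᶜ ∩ Set.Ioo u v) := by
        rcases hdich (Xᶜ ∩ Set.Ioo u v) (Stmt0Aux.d1inter hXc (Stmt0Aux.dIoo hlt' u v)) with
          hI | hCD
        · obtain ⟨t, ht⟩ := hI
          have h1 : t ∈ Z := interior_mono Set.inter_subset_left ht
          exact absurd (Or.inr h1) (hsubD (interior_subset ht).2)
        · exact hCD.2
      have half : ∀ S T : Set M, DiscreteIn S → DiscreteIn T →
          (∀ x ∈ Set.Ioo u v, x ∈ S ∨ x ∈ T) → w ∈ S → False := by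
        intro S T hS hT hcov hwS
        obtain ⟨U, hUo, hUS⟩ := hS w hwS
        have hwU : w ∈ U := by
          have : w ∈ U ∩ S := hUS.symm ▸ Set.mem_singleton w
          exact this.1
        obtain ⟨l, u', hw', hsub'⟩ := mem_nhds_iff_exists_Ioo_subset.1
          ((hUo.inter isOpen_Ioo).mem_nhds ⟨hwU, hwm⟩)
        refine nodense T hT w u' hw'.2 ?_
        intro x hx
        have hxm : x ∈ U ∩ Set.Ioo u v := hsub' ⟨hw'.1.trans hx.1, hx.2⟩
        rcases hcov x hxm.2 with hxS | hxT
        · have hmem : x ∈ U ∩ S := ⟨hxm.1, hxS⟩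
          rw [hUS] at hmem
          exact absurd (Set.mem_singleton_iff.1 hmem) hx.1.ne'
        · exact hxT
      by_cases hwX : w ∈ X
      · exact half _ _ hS1d hS2d (fun x hx => by
          by_cases h : x ∈ X
          exacts [Or.inl ⟨h, hx⟩, Or.inr ⟨h, hx⟩]) ⟨hwX, hwm⟩
      · exact half _ _ hS2d hS1d (fun x hx => by
          by_cases h : x ∈ X
          exacts [Or.inr ⟨h, hx⟩, Or.inl ⟨h, hx⟩]) ⟨hwX, hwm⟩
    have hDcd : IsClosed D ∧ DiscreteIn D := by
      rcases hdich D hDd with h | h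
      · rw [hDint] at h
        exact absurd h Set.not_nonempty_empty
      · exact h
    obtain ⟨b, c, hb, hc, hsmall⟩ : ∃ b c : M, b < a ∧ a < c ∧
        Set.Ioo b c ∩ D ⊆ {a} := by
      by_cases haD : a ∈ D
      · obtain ⟨U, hUo, hUD⟩ := hDcd.2 a haD
        have haU : a ∈ U := by
          have : a ∈ U ∩ D := hUD.symm ▸ Set.mem_singleton a
          exact this.1
        obtain ⟨b, c, hm, hsub⟩ := mem_nhds_iff_exists_Ioo_subset.1 (hUo.mem_nhds haU)
        refine ⟨b, c, hm.1, hm.2, fun x hx => ?_⟩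
        have : x ∈ U ∩ D := ⟨hsub hx.1, hx.2⟩
        rw [hUD] at this
        exact this
      · obtain ⟨b, c, hm, hsub⟩ := mem_nhds_iff_exists_Ioo_subset.1
          (hDcd.1.isOpen_compl.mem_nhds haD)
        exact ⟨b, c, hm.1, hm.2, fun x hx => absurd hx.2 (hsub hx.1)⟩
    have hE : ∀ b' c' : M, Set.Ioo b' c' ⊆ Set.Ioo b c → a ∉ Set.Ioo b' c' →
        X ∩ Set.Ioo b' c' = Set.Ioo b' c' ∨ X ∩ Set.Ioo b' c' = ∅ := by
      intro b' c' hsub hna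
      have hsubYZ : Set.Ioo b' c' ⊆ Y ∪ Z := by
        intro x hx
        by_contra hxD
        have hxD' : x ∈ D := hxD
        have := hsmall ⟨hsub hx, hxD'⟩
        exact hna (Set.mem_singleton_iff.1 this ▸ hx)
      rcases Stmt0Aux.conn hlt' hdc hYd hZd isOpen_interior isOpen_interior hdisj hsubYZ with
        h | h
      · left
        exact Set.inter_eq_self_of_subset_right fun x hx => interior_subset (h hx)
      · right
        rw [Set.eq_empty_iff_forall_notMem]
        rintro x ⟨hx1, hx2⟩
        exact (interior_subset (h hx2) : x ∈ Xᶜ) hx1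
    obtain ⟨I₁, hI₁⟩ : ∃ I₁ : Finset (M × M),
        X ∩ Set.Ioo b a = ⋃ p ∈ I₁, Set.Ioo p.1 p.2 := by
      rcases hE b a (fun x hx => ⟨hx.1, hx.2.trans hc⟩) (fun h => absurd h.2 (lt_irrefl a))
        with h | h
      · exact ⟨{(b, a)}, by simp [h]⟩
      · exact ⟨∅, by simp [h]⟩
    obtain ⟨I₂, hI₂⟩ : ∃ I₂ : Finset (M × M),
        X ∩ Set.Ioo a c = ⋃ p ∈ I₂, Set.Ioo p.1 p.2 := by
      rcases hE a c (fun x hx => ⟨hb.trans hx.1, hx.2⟩) (fun h => absurd h.1 (lt_irrefl a))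
        with h | h
      · exact ⟨{(a, c)}, by simp [h]⟩
      · exact ⟨∅, by simp [h]⟩
    obtain ⟨P, hP⟩ : ∃ P : Finset M, X ∩ {a} = ↑P := by
      by_cases haX : a ∈ X
      · exact ⟨{a}, by
          simp [Set.inter_eq_self_of_subset_right (Set.singleton_subset_iff.2 haX)]⟩
      · refine ⟨∅, ?_⟩
        ext x
        simp only [Set.mem_inter_iff, Set.mem_singleton_iff, Finset.coe_empty,
          Set.mem_empty_iff_false, iff_false, not_and]
        rintro hxX rfl
        exact haX hxX
    refine ⟨b, c, hb, hc, P, I₁ ∪ I₂, ?_⟩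
    have hdecomp : Set.Ioo b c = Set.Ioo b a ∪ {a} ∪ Set.Ioo a c := by
      ext x
      simp only [Set.mem_union, Set.mem_Ioo, Set.mem_singleton_iff]
      constructor
      · rintro ⟨h1, h2⟩
        rcases lt_trichotomy x a with h | h | h
        · exact Or.inl (Or.inl ⟨h1, h⟩)
        · exact Or.inl (Or.inr h)
        · exact Or.inr ⟨h, h2⟩
      · rintro ((⟨h1, h2⟩ | rfl) | ⟨h1, h2⟩)
        exacts [⟨h1, h2.trans hc⟩, ⟨hb, hc⟩, ⟨hb.trans h1, h2⟩]
    rw [hdecomp, Set.inter_union_distrib_left, Set.inter_union_distrib_left, hI₁, hP, hI₂,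
      Finset.set_biUnion_union]
    ext x
    simp only [Set.mem_union]
    tauto
end

section
/- Let M = (M, <, ...) be a definably complete locally o-minimal structure with property (a). Then every definable discrete subset of M^n is closed in M^n. -/
open FirstOrder Set

variable (L : FirstOrder.Language) (M : Type*) [L.Structure M] [Nonempty M] [LinearOrder M]
  [DenselyOrdered M] [NoMinOrder M] [NoMaxOrder M] [TopologicalSpace M] [OrderTopology M]

section Aux

variable {L M}

omit [Nonempty M] in
theorem discreteIn_closed_oneDim (Y : Set M) (hd : DiscreteIn Y)
    (h : ∀ a : M, ∃ b c : M, b < a ∧ a < c ∧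
      ∃ (P : Finset M) (I : Finset (M × M)),
        Y ∩ Set.Ioo b c = ↑P ∪ ⋃ p ∈ I, Set.Ioo p.1 p.2) : IsClosed Y := by
  rw [← isOpen_compl_iff, isOpen_iff_mem_nhds]
  intro a haY
  by_contra hcon
  have hacl : ∀ o : Set M, IsOpen o → a ∈ o → (o ∩ Y).Nonempty := by
    intro U hU haU
    by_contra hne
    exact hcon (Filter.mem_of_superset (hU.mem_nhds haU)
      (fun x hx hxY => hne ⟨x, hx, hxY⟩))
  obtain ⟨b, c, hb, hc, P, I, hPI⟩ := h a
  have hIemp : ∀ p ∈ I, Set.Ioo p.1 p.2 = (∅ : Set M) := by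
    intro p hp
    by_contra hne
    obtain ⟨x, hx⟩ := Set.nonempty_iff_ne_empty.2 hne
    have hxY : x ∈ Y := by
      have : x ∈ (↑P : Set M) ∪ ⋃ p ∈ I, Set.Ioo p.1 p.2 :=
        Or.inr (Set.mem_biUnion hp hx)
      rw [← hPI] at this; exact this.1
    obtain ⟨U, hU, hUY⟩ := hd x hxY
    have hxU : x ∈ U := by
      have hxs : x ∈ ({x} : Set M) := rfl
      rw [← hUY] at hxs; exact hxs.1
    have hopen : IsOpen (U ∩ Set.Ioo p.1 p.2) := hU.inter isOpen_Ioo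
    obtain ⟨s, t, hst, hsub⟩ :=
      mem_nhds_iff_exists_Ioo_subset.1 (hopen.mem_nhds ⟨hxU, hx⟩)
    obtain ⟨y, hy⟩ := exists_between hst.2
    have hymem : y ∈ U ∩ Set.Ioo p.1 p.2 := hsub ⟨lt_trans hst.1 hy.1, hy.2⟩
    have hyY : y ∈ Y := by
      have : y ∈ (↑P : Set M) ∪ ⋃ p ∈ I, Set.Ioo p.1 p.2 :=
        Or.inr (Set.mem_biUnion hp hymem.2)
      rw [← hPI] at this; exact this.1
    have : y ∈ U ∩ Y := ⟨hymem.1, hyY⟩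
    rw [hUY] at this
    exact absurd this (ne_of_gt hy.1)
  have hfin : Y ∩ Set.Ioo b c = ↑P := by
    rw [hPI]
    have : ⋃ p ∈ I, Set.Ioo p.1 p.2 = (∅ : Set M) := by
      simp only [Set.eq_empty_iff_forall_notMem]
      intro x hx
      obtain ⟨p, hp, hxp⟩ := Set.mem_iUnion₂.1 hx
      rw [hIemp p hp] at hxp; exact hxp
    rw [this, Set.union_empty]
  have haP : a ∈ (↑P : Set M) := by
    have hclP : IsClosed (↑P : Set M) := P.finite_toSet.isClosed
    rw [← hclP.closure_eq, mem_closure_iff]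
    intro o ho hao
    obtain ⟨z, hz⟩ := hacl (o ∩ Set.Ioo b c) (ho.inter isOpen_Ioo) ⟨hao, hb, hc⟩
    exact ⟨z, hz.1.1, hfin ▸ ⟨hz.2, hz.1.2⟩⟩
  have haY' : a ∈ Y := by
    have : a ∈ Y ∩ Set.Ioo b c := hfin ▸ haP
    exact this.1
  exact haY haY'

end Aux

theorem stmt1 (hlt : OrderDefinable L M) (hlo : IsLocallyOMinimal L M)
    (hdc : IsDefinablyComplete L M) (ha : PropertyA L M)
    (n : ℕ) (X : Set (Fin n → M)) (hX : (univ : Set M).Definable L X)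
    (hdisc : DiscreteIn X) : IsClosed X := by
  classical
  rcases X.eq_empty_or_nonempty with rfl | hne
  · exact isClosed_empty
  -- coordinate images
  set σ : Fin n → (Fin 1 → Fin n) := fun i _ => i with hσ
  have hσinj : ∀ i, Function.Injective (σ i) := fun i a b _ => Subsingleton.elim a b
  set Z : Fin n → Set (Fin 1 → M) := fun i => (fun v : Fin n → M => v ∘ σ i) '' X with hZ
  set Y : Fin n → Set M := fun i => (fun w : Fin 1 → M => w 0) '' Z i with hY
  have hmemY : ∀ i (x : M), x ∈ Y i ↔ (fun _ : Fin 1 => x) ∈ Z i := by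
    intro i x
    constructor
    · rintro ⟨w, hw, rfl⟩
      have : (fun _ : Fin 1 => w 0) = w := funext fun j => congrArg w (Subsingleton.elim 0 j)
      rwa [this]
    · intro h
      exact ⟨_, h, rfl⟩
  have hZdisc : ∀ i, DiscreteIn (Z i) := fun i =>
    ha n 1 X (σ i) (hσinj i) hX hne hdisc
  have hYdisc : ∀ i, DiscreteIn (Y i) := by
    intro i x hx
    obtain ⟨w, hw, rfl⟩ := hx
    obtain ⟨U, hU, hUZ⟩ := hZdisc i w hw
    refine ⟨(fun y : M => (fun _ : Fin 1 => y)) ⁻¹' U,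
      hU.preimage (continuous_pi fun _ => continuous_id), ?_⟩
    have hww : (fun _ : Fin 1 => w 0) = w := funext fun j => congrArg w (Subsingleton.elim 0 j)
    have hwU : w ∈ U ∩ Z i := by
      have : w ∈ ({w} : Set (Fin 1 → M)) := rfl
      rw [← hUZ] at this; exact this
    ext y
    simp only [Set.mem_inter_iff, Set.mem_preimage, Set.mem_singleton_iff]
    constructor
    · rintro ⟨hyU, hyY⟩
      have hyZ : (fun _ : Fin 1 => y) ∈ Z i := (hmemY i y).1 hyY
      have : (fun _ : Fin 1 => y) ∈ U ∩ Z i := ⟨hyU, hyZ⟩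
      rw [hUZ] at this
      have := congrFun this 0
      exact this
    · rintro rfl
      exact ⟨by rw [hww]; exact hwU.1, (hmemY i (w 0)).2 (by rw [hww]; exact hwU.2)⟩
  have hYdef : ∀ i, (univ : Set M).Definable₁ L (Y i) := by
    intro i
    have himg : (univ : Set M).Definable L (Z i) := hX.image_comp (σ i)
    have heq : {w : Fin 1 → M | w 0 ∈ Y i} = Z i := by
      ext w
      have hww : (fun _ : Fin 1 => w 0) = w := funext fun j => congrArg w (Subsingleton.elim 0 j)
      simp only [Set.mem_setOf_eq]
      rw [hmemY i (w 0), hww]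
    unfold Set.Definable₁
    rw [heq]
    exact himg
  have hYclosed : ∀ i, IsClosed (Y i) :=
    fun i => discreteIn_closed_oneDim (Y i) (hYdisc i) (hlo (Y i) (hYdef i))
  set D : Set (Fin n → M) := ⋂ i, (fun v : Fin n → M => v i) ⁻¹' (Y i) with hD
  have hXD : X ⊆ D := by
    intro v hv
    refine Set.mem_iInter.2 fun i => ?_
    exact (hmemY i (v i)).2 ⟨v, hv, rfl⟩
  have hDclosed : IsClosed D :=
    isClosed_iInter fun i => (hYclosed i).preimage (continuous_apply i)
  apply isClosed_of_closure_subset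
  intro a hacl
  have haD : a ∈ D := closure_minimal hXD hDclosed hacl
  choose U hUo hUY using fun i => hYdisc i (a i) (Set.mem_iInter.1 haD i)
  have hVo : IsOpen (⋂ i, (fun v : Fin n → M => v i) ⁻¹' U i) :=
    isOpen_iInter_of_finite fun i => (hUo i).preimage (continuous_apply i)
  have haV : a ∈ ⋂ i, (fun v : Fin n → M => v i) ⁻¹' U i := by
    refine Set.mem_iInter.2 fun i => ?_
    have : a i ∈ ({a i} : Set M) := rfl
    rw [← hUY i] at this
    exact this.1
  obtain ⟨w, hwV, hwX⟩ := mem_closure_iff.1 hacl _ hVo haV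
  have hwa : w = a := by
    funext i
    have h1 : w i ∈ U i := Set.mem_iInter.1 hwV i
    have h2 : w i ∈ Y i := Set.mem_iInter.1 (hXD hwX) i
    have : w i ∈ U i ∩ Y i := ⟨h1, h2⟩
    rw [hUY i] at this
    exact this
  rwa [← hwa]
end

section
/- Let M = (M, <, ...) be a definably complete locally o-minimal structure with property (a). Let X ⊆ M^n be definable and f: X → M a definable map. If the image f(X) is discrete and every fiber f^{-1}(y) (y ∈ f(X)) is discrete, then X is discrete. -/
open FirstOrder Set

variable (L : FirstOrder.Language) (M : Type*) [L.Structure M] [Nonempty M] [LinearOrder M]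
  [DenselyOrdered M] [NoMinOrder M] [NoMaxOrder M] [TopologicalSpace M] [OrderTopology M]

theorem stmt2 (hlt : OrderDefinable L M) (hlo : IsLocallyOMinimal L M)
    (hdc : IsDefinablyComplete L M) (ha : PropertyA L M)
    (n : ℕ) (X : Set (Fin n → M)) (hX : (univ : Set M).Definable L X)
    (f : (Fin n → M) → M)
    (hf : DefinableMapOn L M X (fun x (_ : Fin 1) => f x))
    (himg : DiscreteIn (f '' X))
    (hfib : ∀ y ∈ f '' X, DiscreteIn (X ∩ f ⁻¹' {y})) :
    DiscreteIn X := by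
  classical
  rcases X.eq_empty_or_nonempty with rfl | hne
  · intro x hx; exact absurd hx (Set.notMem_empty x)
  -- the graph of `f` as a subset of `M^(n+1)`
  set e : Fin n ⊕ Fin 1 ≃ Fin (n + 1) := finSumFinEquiv with he
  set Gr : Set ((Fin n ⊕ Fin 1) → M) :=
    {p | (p ∘ Sum.inl) ∈ X ∧ p ∘ Sum.inr = fun _ => f (p ∘ Sum.inl)} with hGr
  set G : Set (Fin (n + 1) → M) := (fun g => g ∘ (e.symm : Fin (n+1) → Fin n ⊕ Fin 1)) '' Gr
    with hG
  set σ : Fin n → Fin (n + 1) := fun i => e (Sum.inl i) with hσ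
  have hσinj : Function.Injective σ := fun i j hij => by
    have := e.injective hij
    exact Sum.inl.injEq i j ▸ (by injection this)
  -- the image of `G` under composition with `σ` is `X`
  have hcomp : ∀ (v : (Fin n ⊕ Fin 1) → M), (v ∘ (e.symm : Fin (n+1) → _)) ∘ σ = v ∘ Sum.inl := by
    intro v
    funext i
    simp [hσ, Function.comp]
  have himX : (fun v => v ∘ σ) '' G = X := by
    ext x
    constructor
    · rintro ⟨q, ⟨v, hv, rfl⟩, rfl⟩
      show (v ∘ (e.symm : Fin (n+1) → _)) ∘ σ ∈ X
      rw [hcomp v]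
      exact hv.1
    · intro hx
      refine ⟨(Sum.elim x fun _ => f x) ∘ (e.symm : Fin (n+1) → _), ⟨Sum.elim x fun _ => f x,
        ⟨?_, ?_⟩, rfl⟩, ?_⟩
      · simpa using hx
      · funext j; simp
      · show ((Sum.elim x fun _ => f x) ∘ (e.symm : Fin (n+1) → _)) ∘ σ = x
        rw [hcomp]; funext i; simp
  -- `G` is definable
  have hGdef : (univ : Set M).Definable L G := by
    have := Set.Definable.image_comp_equiv (A := (univ : Set M)) (L := L) (s := Gr) hf e.symm
    exact this
  -- `G` is nonempty
  have hGne : G.Nonempty := by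
    obtain ⟨x, hx⟩ := hne
    exact ⟨(Sum.elim x fun _ => f x) ∘ (e.symm : Fin (n+1) → _),
      ⟨Sum.elim x fun _ => f x, ⟨by simpa using hx, by funext j; simp⟩, rfl⟩⟩
  -- `G` is discrete
  have hGdisc : DiscreteIn G := by
    rintro q ⟨v, hv, rfl⟩
    set x : Fin n → M := v ∘ Sum.inl with hxdef
    have hxX : x ∈ X := hv.1
    have hfx : f x ∈ f '' X := ⟨x, hxX, rfl⟩
    obtain ⟨V, hVopen, hVeq⟩ := himg (f x) hfx
    obtain ⟨U, hUopen, hUeq⟩ := hfib (f x) hfx x ⟨hxX, rfl⟩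
    refine ⟨{q | q ∘ σ ∈ U ∧ q (e (Sum.inr 0)) ∈ V}, ?_, ?_⟩
    · have h1 : Continuous fun q : Fin (n+1) → M => q ∘ σ :=
        continuous_pi fun i => continuous_apply (σ i)
      have h2 : Continuous fun q : Fin (n+1) → M => q (e (Sum.inr 0)) :=
        continuous_apply _
      exact (h1.isOpen_preimage U hUopen).inter (h2.isOpen_preimage V hVopen)
    · ext q
      simp only [Set.mem_inter_iff, Set.mem_setOf_eq, Set.mem_singleton_iff]
      constructor
      · rintro ⟨⟨hqU, hqV⟩, w, hw, rfl⟩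
        have hcw := hcomp w
        set y : Fin n → M := w ∘ Sum.inl with hydef
        have hyX : y ∈ X := hw.1
        have hwval : w (Sum.inr 0) = f y := by
          have := congrFun hw.2 0
          simpa using this
        have hqlast : (w ∘ (e.symm : Fin (n+1) → _)) (e (Sum.inr 0)) = f y := by
          simp [Function.comp, hwval]
        have hfy : f y ∈ V ∩ (f '' X) := ⟨by rw [← hqlast]; exact hqV, ⟨y, hyX, rfl⟩⟩
        have hfyx : f y = f x := by rw [hVeq] at hfy; exact hfy
        have hyU : y ∈ U ∩ (X ∩ f ⁻¹' {f x}) := by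
          refine ⟨?_, hyX, by simp [hfyx]⟩
          rw [← hcw]; exact hqU
        have hyx : y = x := by rw [hUeq] at hyU; exact hyU
        -- conclude `w = v`
        have hwv : w = v := by
          funext s
          cases s with
          | inl i => exact congrFun hyx i
          | inr j =>
            have hwj : w (Sum.inr j) = f y := by
              have := congrFun hw.2 j; simpa using this
            have hvj : v (Sum.inr j) = f x := by
              have := congrFun hv.2 j; simpa using this
            rw [hwj, hvj, hfyx]
        rw [hwv]
      · rintro rfl
        have hvval : v (Sum.inr 0) = f x := by
          have := congrFun hv.2 0
          simpa using this
        refine ⟨⟨?_, ?_⟩, v, hv, rfl⟩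
        · rw [hcomp v, ← hxdef]
          have : x ∈ U ∩ (X ∩ f ⁻¹' {f x}) := by rw [hUeq]; rfl
          exact this.1
        · simp only [Function.comp, Equiv.symm_apply_apply]
          rw [hvval]
          have : f x ∈ V ∩ (f '' X) := by rw [hVeq]; rfl
          exact this.1
  have := ha (n + 1) n G σ hσinj hGdef hGne hGdisc
  rwa [himX] at this
end

section
/- Let M = (M, <, ...) be a definably complete locally o-minimal structure enjoying properties (b) and (c). Let X ⊆ M^{m+n} be definable and set S = { x ∈ M^m : the fiber X_x = { y ∈ M^n : (x,y) ∈ X } has nonempty interior in M^n }. If S has nonempty interior in M^m, then X has nonempty interior in M^{m+n}. -/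
set_option linter.unusedSectionVars false
set_option maxHeartbeats 1000000

open FirstOrder Set

variable (L : FirstOrder.Language) (M : Type*) [L.Structure M] [Nonempty M] [LinearOrder M]
  [DenselyOrdered M] [NoMinOrder M] [NoMaxOrder M] [TopologicalSpace M] [OrderTopology M]

section Toolkit

variable {M : Type*} {L : FirstOrder.Language} [L.Structure M]

/-- substitution -/
def subSet {κ lam : Type*} (f : κ → lam) (s : Set (κ → M)) : Set (lam → M) :=
  (fun v => v ∘ f) ⁻¹' s

lemma mem_subSet {κ lam : Type*} (f : κ → lam) (s : Set (κ → M)) (v : lam → M) :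
    v ∈ subSet f s ↔ v ∘ f ∈ s := Iff.rfl

lemma def_subSet {κ lam : Type*} (f : κ → lam) {s : Set (κ → M)}
    (hs : (univ : Set M).Definable L s) : (univ : Set M).Definable L (subSet f s) :=
  hs.preimage_comp f

/-- existential quantification over a fresh variable -/
def ExSet {κ : Type*} (s : Set ((κ ⊕ Fin 1) → M)) : Set (κ → M) :=
  {v | ∃ t : M, Sum.elim v (fun _ => t) ∈ s}

lemma ExSet_eq_image {κ : Type*} (s : Set ((κ ⊕ Fin 1) → M)) :
    ExSet s = (fun g : (κ ⊕ Fin 1) → M => g ∘ Sum.inl) '' s := by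
  ext v
  constructor
  · rintro ⟨t, ht⟩
    exact ⟨Sum.elim v (fun _ => t), ht, Sum.elim_comp_inl _ _⟩
  · rintro ⟨g, hg, rfl⟩
    refine ⟨g (Sum.inr 0), ?_⟩
    convert hg using 1
    funext z
    rcases z with i | j
    · rfl
    · simp [Subsingleton.elim j 0]

lemma def_ExSet {κ : Type*} {s : Set ((κ ⊕ Fin 1) → M)}
    (hs : (univ : Set M).Definable L s) : (univ : Set M).Definable L (ExSet s) := by
  rw [ExSet_eq_image]
  exact hs.image_comp_sumInl_fin 1

/-- universal quantification over a fresh variable -/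
def AllSet {κ : Type*} (s : Set ((κ ⊕ Fin 1) → M)) : Set (κ → M) := (ExSet sᶜ)ᶜ

lemma mem_AllSet {κ : Type*} (s : Set ((κ ⊕ Fin 1) → M)) (v : κ → M) :
    v ∈ AllSet s ↔ ∀ t : M, Sum.elim v (fun _ => t) ∈ s := by
  simp [AllSet, ExSet]

lemma def_AllSet {κ : Type*} {s : Set ((κ ⊕ Fin 1) → M)}
    (hs : (univ : Set M).Definable L s) : (univ : Set M).Definable L (AllSet s) :=
  (def_ExSet hs.compl).compl

/-- fixing some variables to constants -/
lemma def_section {α β : Type*} {s : Set ((α ⊕ β) → M)}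
    (hs : (univ : Set M).Definable L s) (b : α → M) :
    (univ : Set M).Definable L {v : β → M | Sum.elim b v ∈ s} := by
  rw [Set.definable_iff_exists_formula_sum] at hs ⊢
  obtain ⟨φ, hφ⟩ := hs
  refine ⟨φ.relabel (Sum.elim Sum.inl (Sum.elim (fun a => Sum.inl ⟨b a, mem_univ _⟩) Sum.inr)), ?_⟩
  ext v
  rw [hφ]
  simp only [mem_setOf_eq, Language.Formula.realize_relabel]
  constructor <;> intro h <;>
  · convert h using 2
    funext z
    rcases z with p | (a | j) <;> rfl

variable [LinearOrder M]

lemma def_ltSet (hlt : (univ : Set M).Definable L {p : Fin 2 → M | p 0 < p 1})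
    {κ : Type*} (i j : κ) : (univ : Set M).Definable L {v : κ → M | v i < v j} := by
  have := def_subSet (L := L) (![i, j] : Fin 2 → κ) hlt
  convert this using 1
  rfl


lemma def_leSet (hlt : (univ : Set M).Definable L {p : Fin 2 → M | p 0 < p 1})
    {κ : Type*} (i j : κ) : (univ : Set M).Definable L {v : κ → M | v i ≤ v j} := by
  have := (def_ltSet hlt j i).compl
  convert this using 1
  ext v
  simp

lemma def_ltcSet (hlt : (univ : Set M).Definable L {p : Fin 2 → M | p 0 < p 1})
    {κ : Type*} (c : M) (j : κ) : (univ : Set M).Definable L {v : κ → M | c < v j} := by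
  have h2 : (univ : Set M).Definable L {w : (Fin 1 ⊕ κ) → M | w (Sum.inl 0) < w (Sum.inr j)} :=
    def_ltSet hlt _ _
  have := def_section h2 (fun _ : Fin 1 => c)
  convert this using 1
  rfl

lemma def_gtcSet (hlt : (univ : Set M).Definable L {p : Fin 2 → M | p 0 < p 1})
    {κ : Type*} (c : M) (j : κ) : (univ : Set M).Definable L {v : κ → M | v j < c} := by
  have h2 : (univ : Set M).Definable L {w : (Fin 1 ⊕ κ) → M | w (Sum.inr j) < w (Sum.inl 0)} :=
    def_ltSet hlt _ _
  have := def_section h2 (fun _ : Fin 1 => c)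
  convert this using 1
  rfl

end Toolkit

section Topo

variable {M : Type*} [LinearOrder M] [TopologicalSpace M] [OrderTopology M]
  [DenselyOrdered M] [NoMinOrder M] [NoMaxOrder M]

lemma mem_interior_iff_Ioo {Y : Set M} {d : M} :
    d ∈ interior Y ↔ ∃ p q, p < d ∧ d < q ∧ Ioo p q ⊆ Y := by
  rw [mem_interior_iff_mem_nhds, mem_nhds_iff_exists_Ioo_subset]
  constructor
  · rintro ⟨l, u, ⟨h1, h2⟩, h3⟩; exact ⟨l, u, h1, h2, h3⟩
  · rintro ⟨p, q, h1, h2, h3⟩; exact ⟨p, q, ⟨h1, h2⟩, h3⟩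

lemma nonempty_interior_iff_Ioo {Y : Set M} :
    (interior Y).Nonempty ↔ ∃ p q, p < q ∧ Ioo p q ⊆ Y := by
  constructor
  · rintro ⟨d, hd⟩
    obtain ⟨p, q, h1, h2, h3⟩ := mem_interior_iff_Ioo.1 hd
    exact ⟨p, q, h1.trans h2, h3⟩
  · rintro ⟨p, q, h1, h3⟩
    obtain ⟨t, ht⟩ := exists_between h1
    exact ⟨t, (interior_maximal h3 isOpen_Ioo) ht⟩

/-- an open box inside a set with nonempty interior, in a finite product -/
lemma exists_box_subset {κ : Type*} [Finite κ] {W : Set (κ → M)}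
    (h : (interior W).Nonempty) :
    ∃ p q : κ → M, (∀ i, p i < q i) ∧ {v : κ → M | ∀ i, v i ∈ Ioo (p i) (q i)} ⊆ W := by
  obtain ⟨w, hw⟩ := h
  obtain ⟨u, hu, hsub⟩ := (isOpen_pi_iff'.1 isOpen_interior) w hw
  have : ∀ i, ∃ pq : M × M, pq.1 < w i ∧ w i < pq.2 ∧ Ioo pq.1 pq.2 ⊆ u i := by
    intro i
    obtain ⟨p, q, h1, h2, h3⟩ := mem_interior_iff_Ioo.1 (((hu i).1.interior_eq ▸ (hu i).2))
    exact ⟨(p, q), h1, h2, h3⟩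
  choose pq hpq using this
  refine ⟨fun i => (pq i).1, fun i => (pq i).2, fun i => (hpq i).1.trans (hpq i).2.1, ?_⟩
  intro v hv
  refine interior_subset (hsub ?_)
  intro i _
  exact (hpq i).2.2 (hv i)

lemma box_isOpen {κ : Type*} [Finite κ] (p q : κ → M) :
    IsOpen {v : κ → M | ∀ i, v i ∈ Ioo (p i) (q i)} := by
  have : {v : κ → M | ∀ i, v i ∈ Ioo (p i) (q i)} =
      Set.pi univ (fun i => Ioo (p i) (q i)) := by
    ext v; simp [Set.mem_pi]
  rw [this]
  exact isOpen_set_pi finite_univ (fun i _ => isOpen_Ioo)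

lemma box_nonempty {κ : Type*} {p q : κ → M} (h : ∀ i, p i < q i) :
    {v : κ → M | ∀ i, v i ∈ Ioo (p i) (q i)}.Nonempty := by
  have : ∀ i, ∃ t, t ∈ Ioo (p i) (q i) := fun i => exists_between (h i)
  choose t ht using this
  exact ⟨t, ht⟩

/-- reindexing homeomorphism -/
def compHomeo {α β : Type*} (M : Type*) [TopologicalSpace M] (f : α ≃ β) :
    ((β → M) ≃ₜ (α → M)) where
  toFun := fun g => g ∘ f
  invFun := fun g => g ∘ f.symm
  left_inv := fun g => by funext b; simp
  right_inv := fun g => by funext a; simp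
  continuous_toFun := continuous_pi (fun a => continuous_apply (f a))
  continuous_invFun := continuous_pi (fun b => continuous_apply (f.symm b))

lemma interior_image_comp_nonempty_iff {α β : Type*} (f : α ≃ β) (s : Set (β → M)) :
    (interior ((fun g : β → M => g ∘ f) '' s)).Nonempty ↔ (interior s).Nonempty := by
  have h : (fun g : β → M => g ∘ f) '' s = compHomeo M f '' s := rfl
  rw [h, ← Homeomorph.image_interior, Set.image_nonempty]

lemma preimage_comp_eq_image {α β : Type*} (f : α ≃ β) (s : Set (β → M)) :
    (fun g : α → M => g ∘ f.symm) ⁻¹' s = (fun g : β → M => g ∘ f) '' s := by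
  ext v
  constructor
  · intro hv
    exact ⟨v ∘ f.symm, hv, by funext a; simp⟩
  · rintro ⟨g, hg, rfl⟩
    have : (g ∘ f) ∘ f.symm = g := by funext b; simp
    simpa [this] using hg

end Topo

section Transports

variable {L : FirstOrder.Language} {M : Type*} [L.Structure M] [Nonempty M] [LinearOrder M]
  [DenselyOrdered M] [NoMinOrder M] [NoMaxOrder M] [TopologicalSpace M] [OrderTopology M]

lemma propertyB' (hb : PropertyB L M) {ι : Type} [Fintype ι]
    (X₁ X₂ : Set (ι → M)) (h1 : (univ : Set M).Definable L X₁)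
    (h2 : (univ : Set M).Definable L X₂) (h : (interior (X₁ ∪ X₂)).Nonempty) :
    (interior X₁).Nonempty ∨ (interior X₂).Nonempty := by
  classical
  set k := Fintype.card ι
  set e : Fin k ≃ ι := (Fintype.equivFin ι).symm
  set R : (ι → M) → (Fin k → M) := fun g => g ∘ e
  have himg : ∀ s : Set (ι → M), (interior (R '' s)).Nonempty ↔ (interior s).Nonempty :=
    fun s => interior_image_comp_nonempty_iff e s
  have hd1 := h1.image_comp_equiv e
  have hd2 := h2.image_comp_equiv e
  have hU : (interior (R '' X₁ ∪ R '' X₂)).Nonempty := by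
    rw [← image_union]
    exact (himg _).2 h
  rcases hb k (R '' X₁) (R '' X₂) hd1 hd2 hU with h | h
  · exact Or.inl ((himg _).1 h)
  · exact Or.inr ((himg _).1 h)

lemma propertyC' (hc : PropertyC L M) {ι : Type} [Fintype ι] (nt : ℕ)
    (A : Set (ι → M)) (f : (ι → M) → (Fin nt → M))
    (hA : (univ : Set M).Definable L A) (hint : (interior A).Nonempty)
    (hgraph : (univ : Set M).Definable L
      {p : ι ⊕ Fin nt → M | (p ∘ Sum.inl) ∈ A ∧ p ∘ Sum.inr = f (p ∘ Sum.inl)}) :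
    ∃ U : Set (ι → M), (univ : Set M).Definable L U ∧ IsOpen U ∧ U.Nonempty ∧
      U ⊆ A ∧ ContinuousOn f U := by
  classical
  set k := Fintype.card ι
  set e : Fin k ≃ ι := (Fintype.equivFin ι).symm with he
  set R : (ι → M) → (Fin k → M) := fun g => g ∘ e with hR
  have hRR : ∀ x : ι → M, (R x) ∘ (⇑e.symm) = x := by
    intro x; funext i; simp [hR]
  have hyx : ∀ y x : ι → M, R y = R x → y = x := by
    intro y x hyxe
    funext i
    have := congrFun hyxe (e.symm i)
    simpa [hR] using this
  set A' : Set (Fin k → M) := R '' A with hA'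
  set f' : (Fin k → M) → (Fin nt → M) := fun x' => f (x' ∘ ⇑e.symm) with hf'
  have hd : (univ : Set M).Definable L A' := hA.image_comp_equiv e
  have hint' : (interior A').Nonempty := (interior_image_comp_nonempty_iff e A).2 hint
  have hff : ∀ x : ι → M, f' (R x) = f x := fun x => congrArg f (hRR x)
  have hgraph' : (univ : Set M).Definable L
      {p : Fin k ⊕ Fin nt → M | (p ∘ Sum.inl) ∈ A' ∧ p ∘ Sum.inr = f' (p ∘ Sum.inl)} := by
    have him := hgraph.image_comp_equiv (Equiv.sumCongr e (Equiv.refl (Fin nt)))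
    convert him using 1
    ext p
    constructor
    · rintro ⟨⟨x, hx, hxe⟩, hp2⟩
      refine ⟨Sum.elim x (p ∘ Sum.inr), ⟨hx, ?_⟩, ?_⟩
      · have h1 : (Sum.elim x (p ∘ Sum.inr) : ι ⊕ Fin nt → M) ∘ Sum.inl = x := rfl
        have h2 : (Sum.elim x (p ∘ Sum.inr) : ι ⊕ Fin nt → M) ∘ Sum.inr = p ∘ Sum.inr := rfl
        rw [h1, h2, hp2, ← hxe, hff]
      · funext z
        rcases z with i | j
        · have := congrFun hxe i
          simpa [hR] using this
        · rfl
    · rintro ⟨q, ⟨hq1, hq2⟩, rfl⟩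
      have h1 : ((q ∘ ⇑(Equiv.sumCongr e (Equiv.refl (Fin nt)))) ∘ Sum.inl) = R (q ∘ Sum.inl) := by
        funext i; simp [hR]
      have h2 : ((q ∘ ⇑(Equiv.sumCongr e (Equiv.refl (Fin nt)))) ∘ Sum.inr) = q ∘ Sum.inr := by
        funext j; simp
      refine ⟨⟨q ∘ Sum.inl, hq1, h1.symm⟩, ?_⟩
      rw [h1, h2, hff, hq2]
  obtain ⟨U', hU'def, hU'open, hU'ne, hU'sub, hU'cont⟩ := hc k nt A' f' hd hint' hgraph'
  set U : Set (ι → M) := R ⁻¹' U' with hU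
  have hRcont : Continuous R := continuous_pi (fun i => continuous_apply (e i))
  refine ⟨U, ?_, ?_, ?_, ?_, ?_⟩
  · exact hU'def.preimage_comp (⇑e)
  · exact hU'open.preimage hRcont
  · obtain ⟨u', hu'⟩ := hU'ne
    refine ⟨u' ∘ ⇑e.symm, ?_⟩
    have : R (u' ∘ ⇑e.symm) = u' := by funext i; simp [hR]
    simpa [hU, this] using hu'
  · intro x hx
    obtain ⟨y, hy, hye⟩ := hU'sub hx
    exact (hyx y x hye) ▸ hy
  · have hcomp : ContinuousOn (f' ∘ R) U := hU'cont.comp hRcont.continuousOn (fun x hx => hx)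
    exact hcomp.congr (fun x _ => (hff x).symm)

end Transports

section Main

variable {L : FirstOrder.Language} {M : Type*} [L.Structure M] [Nonempty M] [LinearOrder M]
  [DenselyOrdered M] [NoMinOrder M] [NoMaxOrder M] [TopologicalSpace M] [OrderTopology M]

/-- insert a last coordinate -/
def insF {ι : Type*} (x : ι → M) (t : M) : (ι ⊕ Fin 1) → M := Sum.elim x (fun _ => t)

/-- the fiber of `X` over `x`, as a subset of `M` -/
def fibF {ι : Type*} (X : Set ((ι ⊕ Fin 1) → M)) (x : ι → M) : Set M :=
  {t | insF x t ∈ X}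

lemma box_in_X {ι : Type*} [Finite ι] (X : Set ((ι ⊕ Fin 1) → M)) (V : Set (ι → M))
    (hVopen : IsOpen V) {x0 : ι → M} (hx0 : x0 ∈ V) {p q : M} (hpq : p < q)
    (hsub : ∀ x ∈ V, Ioo p q ⊆ fibF X x) : (interior X).Nonempty := by
  set W : Set ((ι ⊕ Fin 1) → M) :=
    {v | (v ∘ Sum.inl) ∈ V ∧ v (Sum.inr 0) ∈ Ioo p q} with hW
  have hWopen : IsOpen W := by
    apply IsOpen.inter
    · exact hVopen.preimage (continuous_pi (fun i => continuous_apply (Sum.inl i)))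
    · exact isOpen_Ioo.preimage (continuous_apply (Sum.inr 0))
  have hWsub : W ⊆ X := by
    rintro v ⟨hv1, hv2⟩
    have hv : v = insF (v ∘ Sum.inl) (v (Sum.inr 0)) := by
      funext z
      rcases z with i | j
      · rfl
      · simp [insF, Subsingleton.elim j 0]
    rw [hv]
    exact hsub _ hv1 hv2
  obtain ⟨t0, ht0⟩ := exists_between hpq
  have hmem : insF x0 t0 ∈ W := ⟨hx0, ht0⟩
  exact ⟨insF x0 t0, (interior_maximal hWsub hWopen) hmem⟩

lemma FINpair {ι : Type} [Fintype ι] (hc : PropertyC L M)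
    (X : Set ((ι ⊕ Fin 1) → M)) (A : Set (ι → M))
    (hA : (univ : Set M).Definable L A) (hAint : (interior A).Nonempty)
    (g h : (ι → M) → M)
    (hgraph : (univ : Set M).Definable L
      {p : ι ⊕ Fin 2 → M | (p ∘ Sum.inl) ∈ A ∧
        p ∘ Sum.inr = (fun x => ![g x, h x]) (p ∘ Sum.inl)})
    (hsub : ∀ x ∈ A, g x < h x ∧ Ioo (g x) (h x) ⊆ fibF X x) :
    (interior X).Nonempty := by
  obtain ⟨U, _, hUopen, hUne, hUsub, hUcont⟩ :=
    propertyC' hc 2 A (fun x => ![g x, h x]) hA hAint hgraph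
  have hgcont : ContinuousOn g U := by
    have := (continuous_apply (0 : Fin 2)).comp_continuousOn hUcont
    exact this
  have hhcont : ContinuousOn h U := by
    have := (continuous_apply (1 : Fin 2)).comp_continuousOn hUcont
    exact this
  obtain ⟨x0, hx0⟩ := hUne
  obtain ⟨hgh, _⟩ := hsub x0 (hUsub hx0)
  obtain ⟨p, hp⟩ := exists_between hgh
  obtain ⟨q, hq⟩ := exists_between hp.2
  set V : Set (ι → M) := (U ∩ g ⁻¹' Iio p) ∩ h ⁻¹' Ioi q with hV
  have hV1open : IsOpen (U ∩ g ⁻¹' Iio p) :=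
    hgcont.isOpen_inter_preimage hUopen isOpen_Iio
  have hVopen : IsOpen V :=
    (hhcont.mono inter_subset_left).isOpen_inter_preimage hV1open isOpen_Ioi
  have hx0V : x0 ∈ V := ⟨⟨hx0, hp.1⟩, hq.2⟩
  apply box_in_X X V hVopen hx0V hq.1
  rintro x ⟨⟨hxU, hxg⟩, hxh⟩ t ht
  exact (hsub x (hUsub hxU)).2 ⟨lt_trans hxg ht.1, lt_trans ht.2 hxh⟩

lemma FINray {ι : Type} [Fintype ι] (hc : PropertyC L M)
    (X : Set ((ι ⊕ Fin 1) → M)) (A : Set (ι → M))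
    (hA : (univ : Set M).Definable L A) (hAint : (interior A).Nonempty)
    (g : (ι → M) → M)
    (hgraph : (univ : Set M).Definable L
      {p : ι ⊕ Fin 1 → M | (p ∘ Sum.inl) ∈ A ∧
        p ∘ Sum.inr = (fun x => ![g x]) (p ∘ Sum.inl)})
    (hsub : ∀ x ∈ A, Ioi (g x) ⊆ fibF X x) :
    (interior X).Nonempty := by
  obtain ⟨U, _, hUopen, hUne, hUsub, hUcont⟩ :=
    propertyC' hc 1 A (fun x => ![g x]) hA hAint hgraph
  have hgcont : ContinuousOn g U := by
    have := (continuous_apply (0 : Fin 1)).comp_continuousOn hUcont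
    exact this
  obtain ⟨x0, hx0⟩ := hUne
  obtain ⟨p, hp⟩ := exists_gt (g x0)
  obtain ⟨q, hq⟩ := exists_gt p
  set V : Set (ι → M) := U ∩ g ⁻¹' Iio p with hV
  have hVopen : IsOpen V := hgcont.isOpen_inter_preimage hUopen isOpen_Iio
  apply box_in_X X V hVopen (⟨hx0, hp⟩ : x0 ∈ V) hq
  rintro x ⟨hxU, hxg⟩ t ht
  exact hsub x (hUsub hxU) (lt_trans hxg ht.1)

lemma FINray' {ι : Type} [Fintype ι] (hc : PropertyC L M)
    (X : Set ((ι ⊕ Fin 1) → M)) (A : Set (ι → M))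
    (hA : (univ : Set M).Definable L A) (hAint : (interior A).Nonempty)
    (g : (ι → M) → M)
    (hgraph : (univ : Set M).Definable L
      {p : ι ⊕ Fin 1 → M | (p ∘ Sum.inl) ∈ A ∧
        p ∘ Sum.inr = (fun x => ![g x]) (p ∘ Sum.inl)})
    (hsub : ∀ x ∈ A, Iio (g x) ⊆ fibF X x) :
    (interior X).Nonempty := by
  obtain ⟨U, _, hUopen, hUne, hUsub, hUcont⟩ :=
    propertyC' hc 1 A (fun x => ![g x]) hA hAint hgraph
  have hgcont : ContinuousOn g U := by
    have := (continuous_apply (0 : Fin 1)).comp_continuousOn hUcont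
    exact this
  obtain ⟨x0, hx0⟩ := hUne
  obtain ⟨q, hq⟩ := exists_lt (g x0)
  obtain ⟨p, hp⟩ := exists_lt q
  set V : Set (ι → M) := U ∩ g ⁻¹' Ioi q with hV
  have hVopen : IsOpen V := hgcont.isOpen_inter_preimage hUopen isOpen_Ioi
  apply box_in_X X V hVopen (⟨hx0, hq⟩ : x0 ∈ V) hp
  rintro x ⟨hxU, hxg⟩ t ht
  exact hsub x (hUsub hxU) (lt_trans ht.2 hxg)

end Main

section Attach

variable {L : FirstOrder.Language} {M : Type*} [L.Structure M] [Nonempty M] [LinearOrder M]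
  [DenselyOrdered M] [NoMinOrder M] [NoMaxOrder M] [TopologicalSpace M] [OrderTopology M]

lemma attach_right (hlo : IsLocallyOMinimal L M) {Y : Set M}
    (hY : (univ : Set M).Definable₁ L Y) {a : M}
    (hacc : ∀ s, a < s → ∃ e, e ∈ Y ∧ a < e ∧ e < s) :
    ∃ t, a < t ∧ Ioo a t ⊆ Y := by
  classical
  obtain ⟨b1, b2, hb1, hb2, P, I, hdec⟩ := hlo Y hY a
  set C : Finset M := insert b2 (P ∪ I.image Prod.fst ∪ I.image Prod.snd) with hC
  set Cf := C.filter (fun v => a < v) with hCf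
  have hb2C : b2 ∈ Cf := Finset.mem_filter.2 ⟨Finset.mem_insert_self _ _, hb2⟩
  have hCfne : Cf.Nonempty := ⟨b2, hb2C⟩
  set s0 := Cf.min' hCfne with hs0
  have hs0a : a < s0 := (Finset.mem_filter.1 (Cf.min'_mem hCfne)).2
  have hmin : ∀ v ∈ C, a < v → s0 ≤ v := fun v hv hav =>
    Finset.min'_le _ v (Finset.mem_filter.2 ⟨hv, hav⟩)
  have hs0b2 : s0 ≤ b2 := hmin b2 (Finset.mem_insert_self _ _) hb2
  obtain ⟨e, heY, hae, hes0⟩ := hacc s0 hs0a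
  have heY2 : e ∈ Y ∩ Ioo b1 b2 := ⟨heY, lt_trans hb1 hae, lt_of_lt_of_le hes0 hs0b2⟩
  rw [hdec] at heY2
  rcases heY2 with heP | heI
  · exact absurd hes0 (not_lt.2 (hmin e (Finset.mem_insert_of_mem
      (Finset.mem_union_left _ (Finset.mem_union_left _ heP))) hae))
  · obtain ⟨pq, hpqI, hw⟩ := by
      simpa only [Set.mem_iUnion, exists_prop] using heI
    rcases le_or_gt pq.1 a with hpa | hap
    · refine ⟨pq.2, lt_trans hae hw.2, ?_⟩
      intro w hww
      have hwmem : w ∈ Ioo pq.1 pq.2 := ⟨lt_of_le_of_lt hpa hww.1, hww.2⟩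
      have : w ∈ (↑P : Set M) ∪ ⋃ p ∈ I, Ioo p.1 p.2 :=
        Or.inr (Set.mem_iUnion₂.2 ⟨pq, hpqI, hwmem⟩)
      rw [← hdec] at this
      exact this.1
    · have h1 : pq.1 ∈ C := Finset.mem_insert_of_mem (Finset.mem_union_left _
        (Finset.mem_union_right _ (Finset.mem_image_of_mem Prod.fst hpqI)))
      exact absurd (lt_trans hw.1 hes0) (not_lt.2 (hmin pq.1 h1 hap))

lemma attach_left (hlo : IsLocallyOMinimal L M) {Y : Set M}
    (hY : (univ : Set M).Definable₁ L Y) {a : M}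
    (hacc : ∀ s, s < a → ∃ e, e ∈ Y ∧ s < e ∧ e < a) :
    ∃ t, t < a ∧ Ioo t a ⊆ Y := by
  classical
  obtain ⟨b1, b2, hb1, hb2, P, I, hdec⟩ := hlo Y hY a
  set C : Finset M := insert b1 (P ∪ I.image Prod.fst ∪ I.image Prod.snd) with hC
  set Cf := C.filter (fun v => v < a) with hCf
  have hb1C : b1 ∈ Cf := Finset.mem_filter.2 ⟨Finset.mem_insert_self _ _, hb1⟩
  have hCfne : Cf.Nonempty := ⟨b1, hb1C⟩
  set s0 := Cf.max' hCfne with hs0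
  have hs0a : s0 < a := (Finset.mem_filter.1 (Cf.max'_mem hCfne)).2
  have hmax : ∀ v ∈ C, v < a → v ≤ s0 := fun v hv hav =>
    Finset.le_max' Cf v (Finset.mem_filter.2 ⟨hv, hav⟩)
  have hs0b1 : b1 ≤ s0 := hmax b1 (Finset.mem_insert_self _ _) hb1
  obtain ⟨e, heY, hse, hea⟩ := hacc s0 hs0a
  have heY2 : e ∈ Y ∩ Ioo b1 b2 := ⟨heY, lt_of_le_of_lt hs0b1 hse, lt_trans hea hb2⟩
  rw [hdec] at heY2
  rcases heY2 with heP | heI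
  · exact absurd hse (not_lt.2 (hmax e (Finset.mem_insert_of_mem
      (Finset.mem_union_left _ (Finset.mem_union_left _ heP))) hea))
  · obtain ⟨pq, hpqI, hw⟩ := by
      simpa only [Set.mem_iUnion, exists_prop] using heI
    rcases le_or_gt a pq.2 with hpa | hap
    · refine ⟨pq.1, lt_trans hw.1 hea, ?_⟩
      intro w hww
      have hwmem : w ∈ Ioo pq.1 pq.2 := ⟨hww.1, lt_of_lt_of_le hww.2 hpa⟩
      have : w ∈ (↑P : Set M) ∪ ⋃ p ∈ I, Ioo p.1 p.2 :=
        Or.inr (Set.mem_iUnion₂.2 ⟨pq, hpqI, hwmem⟩)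
      rw [← hdec] at this
      exact this.1
    · have h1 : pq.2 ∈ C := Finset.mem_insert_of_mem
        (Finset.mem_union_right _ (Finset.mem_image_of_mem Prod.snd hpqI))
      exact absurd (lt_trans hse hw.2) (not_lt.2 (hmax pq.2 h1 hap))

end Attach

section FormulaSets

variable {L : FirstOrder.Language} {M : Type*} [L.Structure M] [LinearOrder M]

variable {ι κ : Type*}

/-- `insF (v ∘ f) (v j) ∈ X` -/
def memXset (X : Set ((ι ⊕ Fin 1) → M)) (f : ι → κ) (j : κ) : Set (κ → M) :=
  subSet (Sum.elim f (fun _ => j)) X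

lemma mem_memXset (X : Set ((ι ⊕ Fin 1) → M)) (f : ι → κ) (j : κ) (v : κ → M) :
    v ∈ memXset X f j ↔ insF (v ∘ f) (v j) ∈ X := by
  rw [memXset, mem_subSet]
  have : v ∘ Sum.elim f (fun _ => j) = insF (v ∘ f) (v j) := by
    funext z; rcases z with i | jj <;> rfl
  rw [this]

lemma def_memXset (hX : (univ : Set M).Definable L X) (f : ι → κ) (j : κ) :
    (univ : Set M).Definable L (memXset X f j) := def_subSet _ hX

/-- `Ioo (v i) (v j) ⊆ fibF X (v ∘ f)` -/
def IooSubSet (X : Set ((ι ⊕ Fin 1) → M)) (f : ι → κ) (i j : κ) : Set (κ → M) :=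
  AllSet (({w : (κ ⊕ Fin 1) → M | w (Sum.inl i) < w (Sum.inr 0)} ∩
    {w | w (Sum.inr 0) < w (Sum.inl j)})ᶜ ∪ memXset X (Sum.inl ∘ f) (Sum.inr 0))

lemma mem_IooSubSet (X : Set ((ι ⊕ Fin 1) → M)) (f : ι → κ) (i j : κ) (v : κ → M) :
    v ∈ IooSubSet X f i j ↔ Ioo (v i) (v j) ⊆ fibF X (v ∘ f) := by
  rw [IooSubSet, mem_AllSet]
  constructor
  · intro H t ht
    have h2 := H t
    rw [mem_union, mem_compl_iff, mem_inter_iff, mem_setOf_eq, mem_setOf_eq,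
      mem_memXset] at h2
    rcases h2 with h | h
    · exact absurd (⟨ht.1, ht.2⟩ : _ ∧ _) h
    · exact h
  · intro H t
    rw [mem_union, mem_compl_iff, mem_inter_iff, mem_setOf_eq, mem_setOf_eq, mem_memXset]
    by_cases ht : v i < t ∧ t < v j
    · exact Or.inr (H ⟨ht.1, ht.2⟩)
    · exact Or.inl ht

lemma def_IooSubSet (hlt : (univ : Set M).Definable L {p : Fin 2 → M | p 0 < p 1})
    (hX : (univ : Set M).Definable L X) (f : ι → κ) (i j : κ) :
    (univ : Set M).Definable L (IooSubSet X f i j) :=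
  def_AllSet ((((def_ltSet hlt _ _).inter (def_ltSet hlt _ _)).compl).union
    (def_memXset hX _ _))

/-- the interior of the fiber, concretely -/
def DsetM (X : Set ((ι ⊕ Fin 1) → M)) (x : ι → M) : Set M :=
  {d | ∃ p q, p < d ∧ d < q ∧ Ioo p q ⊆ fibF X x}

variable [TopologicalSpace M] [OrderTopology M] [DenselyOrdered M] [NoMinOrder M] [NoMaxOrder M]

lemma DsetM_eq_interior (X : Set ((ι ⊕ Fin 1) → M)) (x : ι → M) :
    DsetM X x = interior (fibF X x) := by
  ext d
  rw [mem_interior_iff_Ioo]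
  constructor
  · rintro ⟨p, q, h1, h2, h3⟩; exact ⟨p, q, h1, h2, h3⟩
  · rintro ⟨p, q, h1, h2, h3⟩; exact ⟨p, q, h1, h2, h3⟩

/-- `v i ∈ DsetM X (v ∘ f)` -/
def DsetPSet (X : Set ((ι ⊕ Fin 1) → M)) (f : ι → κ) (i : κ) : Set (κ → M) :=
  ExSet (ExSet ({w : ((κ ⊕ Fin 1) ⊕ Fin 1) → M |
      w (Sum.inl (Sum.inr 0)) < w (Sum.inl (Sum.inl i))} ∩
    {w | w (Sum.inl (Sum.inl i)) < w (Sum.inr 0)} ∩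
    IooSubSet X (Sum.inl ∘ Sum.inl ∘ f) (Sum.inl (Sum.inr 0)) (Sum.inr 0)))

lemma mem_DsetPSet (X : Set ((ι ⊕ Fin 1) → M)) (f : ι → κ) (i : κ) (v : κ → M) :
    v ∈ DsetPSet X f i ↔ v i ∈ DsetM X (v ∘ f) := by
  rw [DsetPSet]
  constructor
  · rintro ⟨p, q, ⟨h1, h2⟩, h3⟩
    rw [mem_IooSubSet] at h3
    exact ⟨p, q, h1, h2, h3⟩
  · rintro ⟨p, q, h1, h2, h3⟩
    refine ⟨p, q, ⟨h1, h2⟩, ?_⟩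
    rw [mem_IooSubSet]
    exact h3

lemma def_DsetPSet (hlt : (univ : Set M).Definable L {p : Fin 2 → M | p 0 < p 1})
    (hX : (univ : Set M).Definable L X) (f : ι → κ) (i : κ) :
    (univ : Set M).Definable L (DsetPSet X f i) :=
  def_ExSet (def_ExSet (((def_ltSet hlt _ _).inter (def_ltSet hlt _ _)).inter
    (def_IooSubSet hlt hX _ _ _)))

end FormulaSets

section FormulaSets2

variable {L : FirstOrder.Language} {M : Type*} [L.Structure M] [LinearOrder M]
  [TopologicalSpace M] [OrderTopology M] [DenselyOrdered M] [NoMinOrder M] [NoMaxOrder M]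
variable {ι κ : Type*}

/-- `v i ∈ lowerBounds (DsetM X (v ∘ f) ∩ Ioi c)` -/
def lbDIset (X : Set ((ι ⊕ Fin 1) → M)) (c : M) (f : ι → κ) (i : κ) : Set (κ → M) :=
  AllSet ((DsetPSet X (Sum.inl ∘ f) (Sum.inr 0) ∩ {w | c < w (Sum.inr 0)})ᶜ ∪
    {w | w (Sum.inl i) ≤ w (Sum.inr 0)})

lemma mem_lbDIset (X : Set ((ι ⊕ Fin 1) → M)) (c : M) (f : ι → κ) (i : κ) (v : κ → M) :
    v ∈ lbDIset X c f i ↔ v i ∈ lowerBounds (DsetM X (v ∘ f) ∩ Ioi c) := by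
  rw [lbDIset, mem_AllSet, mem_lowerBounds]
  constructor
  · intro H t ht
    have h2 := H t
    rw [mem_union, mem_compl_iff, mem_inter_iff, mem_setOf_eq, mem_setOf_eq,
      mem_DsetPSet] at h2
    rcases h2 with h | h
    · exact absurd (⟨ht.1, ht.2⟩ : _ ∧ _) h
    · exact h
  · intro H t
    rw [mem_union, mem_compl_iff, mem_inter_iff, mem_setOf_eq, mem_setOf_eq, mem_DsetPSet]
    by_cases ht : t ∈ DsetM X (v ∘ f) ∧ c < t
    · exact Or.inr (H t ⟨ht.1, ht.2⟩)
    · exact Or.inl ht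

lemma def_lbDIset (hlt : (univ : Set M).Definable L {p : Fin 2 → M | p 0 < p 1})
    {X : Set ((ι ⊕ Fin 1) → M)} (hX : (univ : Set M).Definable L X) (c : M) (f : ι → κ)
    (i : κ) : (univ : Set M).Definable L (lbDIset X c f i) :=
  def_AllSet ((((def_DsetPSet hlt hX _ _).inter (def_ltcSet hlt c _)).compl).union
    (def_leSet hlt _ _))

/-- `IsGLB (DsetM X (v ∘ f) ∩ Ioi c) (v i)` -/
def glbDIset (X : Set ((ι ⊕ Fin 1) → M)) (c : M) (f : ι → κ) (i : κ) : Set (κ → M) :=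
  lbDIset X c f i ∩
    AllSet ((lbDIset X c (Sum.inl ∘ f) (Sum.inr 0))ᶜ ∪ {w | w (Sum.inr 0) ≤ w (Sum.inl i)})

lemma mem_glbDIset (X : Set ((ι ⊕ Fin 1) → M)) (c : M) (f : ι → κ) (i : κ) (v : κ → M) :
    v ∈ glbDIset X c f i ↔ IsGLB (DsetM X (v ∘ f) ∩ Ioi c) (v i) := by
  rw [glbDIset, mem_inter_iff, mem_lbDIset, mem_AllSet, IsGLB, IsGreatest]
  apply and_congr Iff.rfl
  rw [mem_upperBounds]
  constructor
  · intro H t ht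
    have h2 := H t
    rw [mem_union, mem_compl_iff, mem_lbDIset] at h2
    rcases h2 with h | h
    · exact absurd ht h
    · exact h
  · intro H t
    rw [mem_union, mem_compl_iff, mem_lbDIset]
    by_cases ht : t ∈ lowerBounds (DsetM X (v ∘ f) ∩ Ioi c)
    · exact Or.inr (H t ht)
    · exact Or.inl ht

lemma def_glbDIset (hlt : (univ : Set M).Definable L {p : Fin 2 → M | p 0 < p 1})
    {X : Set ((ι ⊕ Fin 1) → M)} (hX : (univ : Set M).Definable L X) (c : M) (f : ι → κ)
    (i : κ) : (univ : Set M).Definable L (glbDIset X c f i) :=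
  (def_lbDIset hlt hX c f i).inter
    (def_AllSet (((def_lbDIset hlt hX c _ _).compl).union (def_leSet hlt _ _)))

/-- mirror: `v i ∈ upperBounds (DsetM X (v ∘ f) ∩ Iio c)` -/
def ubDIset (X : Set ((ι ⊕ Fin 1) → M)) (c : M) (f : ι → κ) (i : κ) : Set (κ → M) :=
  AllSet ((DsetPSet X (Sum.inl ∘ f) (Sum.inr 0) ∩ {w | w (Sum.inr 0) < c})ᶜ ∪
    {w | w (Sum.inr 0) ≤ w (Sum.inl i)})

lemma mem_ubDIset (X : Set ((ι ⊕ Fin 1) → M)) (c : M) (f : ι → κ) (i : κ) (v : κ → M) :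
    v ∈ ubDIset X c f i ↔ v i ∈ upperBounds (DsetM X (v ∘ f) ∩ Iio c) := by
  rw [ubDIset, mem_AllSet, mem_upperBounds]
  constructor
  · intro H t ht
    have h2 := H t
    rw [mem_union, mem_compl_iff, mem_inter_iff, mem_setOf_eq, mem_setOf_eq,
      mem_DsetPSet] at h2
    rcases h2 with h | h
    · exact absurd (⟨ht.1, ht.2⟩ : _ ∧ _) h
    · exact h
  · intro H t
    rw [mem_union, mem_compl_iff, mem_inter_iff, mem_setOf_eq, mem_setOf_eq, mem_DsetPSet]
    by_cases ht : t ∈ DsetM X (v ∘ f) ∧ t < c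
    · exact Or.inr (H t ⟨ht.1, ht.2⟩)
    · exact Or.inl ht

lemma def_ubDIset (hlt : (univ : Set M).Definable L {p : Fin 2 → M | p 0 < p 1})
    {X : Set ((ι ⊕ Fin 1) → M)} (hX : (univ : Set M).Definable L X) (c : M) (f : ι → κ)
    (i : κ) : (univ : Set M).Definable L (ubDIset X c f i) :=
  def_AllSet ((((def_DsetPSet hlt hX _ _).inter (def_gtcSet hlt c _)).compl).union
    (def_leSet hlt _ _))

/-- mirror: `IsLUB (DsetM X (v ∘ f) ∩ Iio c) (v i)` -/
def lubDIset (X : Set ((ι ⊕ Fin 1) → M)) (c : M) (f : ι → κ) (i : κ) : Set (κ → M) :=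
  ubDIset X c f i ∩
    AllSet ((ubDIset X c (Sum.inl ∘ f) (Sum.inr 0))ᶜ ∪ {w | w (Sum.inl i) ≤ w (Sum.inr 0)})

lemma mem_lubDIset (X : Set ((ι ⊕ Fin 1) → M)) (c : M) (f : ι → κ) (i : κ) (v : κ → M) :
    v ∈ lubDIset X c f i ↔ IsLUB (DsetM X (v ∘ f) ∩ Iio c) (v i) := by
  rw [lubDIset, mem_inter_iff, mem_ubDIset, mem_AllSet, IsLUB, IsLeast]
  apply and_congr Iff.rfl
  rw [mem_lowerBounds]
  constructor
  · intro H t ht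
    have h2 := H t
    rw [mem_union, mem_compl_iff, mem_ubDIset] at h2
    rcases h2 with h | h
    · exact absurd ht h
    · exact h
  · intro H t
    rw [mem_union, mem_compl_iff, mem_ubDIset]
    by_cases ht : t ∈ upperBounds (DsetM X (v ∘ f) ∩ Iio c)
    · exact Or.inr (H t ht)
    · exact Or.inl ht

lemma def_lubDIset (hlt : (univ : Set M).Definable L {p : Fin 2 → M | p 0 < p 1})
    {X : Set ((ι ⊕ Fin 1) → M)} (hX : (univ : Set M).Definable L X) (c : M) (f : ι → κ)
    (i : κ) : (univ : Set M).Definable L (lubDIset X c f i) :=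
  (def_ubDIset hlt hX c f i).inter
    (def_AllSet (((def_ubDIset hlt hX c _ _).compl).union (def_leSet hlt _ _)))

end FormulaSets2

section FormulaSets3

variable {L : FirstOrder.Language} {M : Type*} [L.Structure M] [LinearOrder M]
  [TopologicalSpace M] [OrderTopology M] [DenselyOrdered M] [NoMinOrder M] [NoMaxOrder M]
variable {ι κ : Type*}

/-- right-attached intervals: `{t | z < t ∧ Ioo z t ⊆ fibF X x}` -/
def RsetM (X : Set ((ι ⊕ Fin 1) → M)) (x : ι → M) (z : M) : Set M :=
  {t | z < t ∧ Ioo z t ⊆ fibF X x}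

/-- left-attached intervals: `{t | t < z ∧ Ioo t z ⊆ fibF X x}` -/
def LsetM (X : Set ((ι ⊕ Fin 1) → M)) (x : ι → M) (z : M) : Set M :=
  {t | t < z ∧ Ioo t z ⊆ fibF X x}

/-- `v i ∈ RsetM X (v ∘ f) (v z)` -/
def RmemSet (X : Set ((ι ⊕ Fin 1) → M)) (f : ι → κ) (z i : κ) : Set (κ → M) :=
  {v | v z < v i} ∩ IooSubSet X f z i

lemma mem_RmemSet (X : Set ((ι ⊕ Fin 1) → M)) (f : ι → κ) (z i : κ) (v : κ → M) :
    v ∈ RmemSet X f z i ↔ v i ∈ RsetM X (v ∘ f) (v z) := by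
  rw [RmemSet, mem_inter_iff, mem_setOf_eq, mem_IooSubSet]
  exact Iff.rfl

lemma def_RmemSet (hlt : (univ : Set M).Definable L {p : Fin 2 → M | p 0 < p 1})
    {X : Set ((ι ⊕ Fin 1) → M)} (hX : (univ : Set M).Definable L X) (f : ι → κ) (z i : κ) :
    (univ : Set M).Definable L (RmemSet X f z i) :=
  (def_ltSet hlt _ _).inter (def_IooSubSet hlt hX _ _ _)

/-- `v i ∈ LsetM X (v ∘ f) (v z)` -/
def LmemSet (X : Set ((ι ⊕ Fin 1) → M)) (f : ι → κ) (z i : κ) : Set (κ → M) :=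
  {v | v i < v z} ∩ IooSubSet X f i z

lemma mem_LmemSet (X : Set ((ι ⊕ Fin 1) → M)) (f : ι → κ) (z i : κ) (v : κ → M) :
    v ∈ LmemSet X f z i ↔ v i ∈ LsetM X (v ∘ f) (v z) := by
  rw [LmemSet, mem_inter_iff, mem_setOf_eq, mem_IooSubSet]
  exact Iff.rfl

lemma def_LmemSet (hlt : (univ : Set M).Definable L {p : Fin 2 → M | p 0 < p 1})
    {X : Set ((ι ⊕ Fin 1) → M)} (hX : (univ : Set M).Definable L X) (f : ι → κ) (z i : κ) :
    (univ : Set M).Definable L (LmemSet X f z i) :=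
  (def_ltSet hlt _ _).inter (def_IooSubSet hlt hX _ _ _)

/-- `v i ∈ upperBounds (RsetM X (v ∘ f) (v z))` -/
def ubRset (X : Set ((ι ⊕ Fin 1) → M)) (f : ι → κ) (z i : κ) : Set (κ → M) :=
  AllSet ((RmemSet X (Sum.inl ∘ f) (Sum.inl z) (Sum.inr 0))ᶜ ∪
    {w | w (Sum.inr 0) ≤ w (Sum.inl i)})

lemma mem_ubRset (X : Set ((ι ⊕ Fin 1) → M)) (f : ι → κ) (z i : κ) (v : κ → M) :
    v ∈ ubRset X f z i ↔ v i ∈ upperBounds (RsetM X (v ∘ f) (v z)) := by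
  rw [ubRset, mem_AllSet, mem_upperBounds]
  constructor
  · intro H t ht
    have h2 := H t
    rw [mem_union, mem_compl_iff, mem_RmemSet] at h2
    rcases h2 with h | h
    · exact absurd ht h
    · exact h
  · intro H t
    rw [mem_union, mem_compl_iff, mem_RmemSet]
    by_cases ht : t ∈ RsetM X (v ∘ f) (v z)
    · exact Or.inr (H t ht)
    · exact Or.inl ht

lemma def_ubRset (hlt : (univ : Set M).Definable L {p : Fin 2 → M | p 0 < p 1})
    {X : Set ((ι ⊕ Fin 1) → M)} (hX : (univ : Set M).Definable L X) (f : ι → κ) (z i : κ) :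
    (univ : Set M).Definable L (ubRset X f z i) :=
  def_AllSet (((def_RmemSet hlt hX _ _ _).compl).union (def_leSet hlt _ _))

/-- `IsLUB (RsetM X (v ∘ f) (v z)) (v i)` -/
def lubRset (X : Set ((ι ⊕ Fin 1) → M)) (f : ι → κ) (z i : κ) : Set (κ → M) :=
  ubRset X f z i ∩
    AllSet ((ubRset X (Sum.inl ∘ f) (Sum.inl z) (Sum.inr 0))ᶜ ∪
      {w | w (Sum.inl i) ≤ w (Sum.inr 0)})

lemma mem_lubRset (X : Set ((ι ⊕ Fin 1) → M)) (f : ι → κ) (z i : κ) (v : κ → M) :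
    v ∈ lubRset X f z i ↔ IsLUB (RsetM X (v ∘ f) (v z)) (v i) := by
  rw [lubRset, mem_inter_iff, mem_ubRset, mem_AllSet, IsLUB, IsLeast]
  apply and_congr Iff.rfl
  rw [mem_lowerBounds]
  constructor
  · intro H t ht
    have h2 := H t
    rw [mem_union, mem_compl_iff, mem_ubRset] at h2
    rcases h2 with h | h
    · exact absurd ht h
    · exact h
  · intro H t
    rw [mem_union, mem_compl_iff, mem_ubRset]
    by_cases ht : t ∈ upperBounds (RsetM X (v ∘ f) (v z))
    · exact Or.inr (H t ht)
    · exact Or.inl ht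

lemma def_lubRset (hlt : (univ : Set M).Definable L {p : Fin 2 → M | p 0 < p 1})
    {X : Set ((ι ⊕ Fin 1) → M)} (hX : (univ : Set M).Definable L X) (f : ι → κ) (z i : κ) :
    (univ : Set M).Definable L (lubRset X f z i) :=
  (def_ubRset hlt hX _ _ _).inter
    (def_AllSet (((def_ubRset hlt hX _ _ _).compl).union (def_leSet hlt _ _)))

/-- `v i ∈ lowerBounds (LsetM X (v ∘ f) (v z))` -/
def lbLset (X : Set ((ι ⊕ Fin 1) → M)) (f : ι → κ) (z i : κ) : Set (κ → M) :=
  AllSet ((LmemSet X (Sum.inl ∘ f) (Sum.inl z) (Sum.inr 0))ᶜ ∪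
    {w | w (Sum.inl i) ≤ w (Sum.inr 0)})

lemma mem_lbLset (X : Set ((ι ⊕ Fin 1) → M)) (f : ι → κ) (z i : κ) (v : κ → M) :
    v ∈ lbLset X f z i ↔ v i ∈ lowerBounds (LsetM X (v ∘ f) (v z)) := by
  rw [lbLset, mem_AllSet, mem_lowerBounds]
  constructor
  · intro H t ht
    have h2 := H t
    rw [mem_union, mem_compl_iff, mem_LmemSet] at h2
    rcases h2 with h | h
    · exact absurd ht h
    · exact h
  · intro H t
    rw [mem_union, mem_compl_iff, mem_LmemSet]
    by_cases ht : t ∈ LsetM X (v ∘ f) (v z)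
    · exact Or.inr (H t ht)
    · exact Or.inl ht

lemma def_lbLset (hlt : (univ : Set M).Definable L {p : Fin 2 → M | p 0 < p 1})
    {X : Set ((ι ⊕ Fin 1) → M)} (hX : (univ : Set M).Definable L X) (f : ι → κ) (z i : κ) :
    (univ : Set M).Definable L (lbLset X f z i) :=
  def_AllSet (((def_LmemSet hlt hX _ _ _).compl).union (def_leSet hlt _ _))

/-- `IsGLB (LsetM X (v ∘ f) (v z)) (v i)` -/
def glbLset (X : Set ((ι ⊕ Fin 1) → M)) (f : ι → κ) (z i : κ) : Set (κ → M) :=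
  lbLset X f z i ∩
    AllSet ((lbLset X (Sum.inl ∘ f) (Sum.inl z) (Sum.inr 0))ᶜ ∪
      {w | w (Sum.inr 0) ≤ w (Sum.inl i)})

lemma mem_glbLset (X : Set ((ι ⊕ Fin 1) → M)) (f : ι → κ) (z i : κ) (v : κ → M) :
    v ∈ glbLset X f z i ↔ IsGLB (LsetM X (v ∘ f) (v z)) (v i) := by
  rw [glbLset, mem_inter_iff, mem_lbLset, mem_AllSet, IsGLB, IsGreatest]
  apply and_congr Iff.rfl
  rw [mem_upperBounds]
  constructor
  · intro H t ht
    have h2 := H t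
    rw [mem_union, mem_compl_iff, mem_lbLset] at h2
    rcases h2 with h | h
    · exact absurd ht h
    · exact h
  · intro H t
    rw [mem_union, mem_compl_iff, mem_lbLset]
    by_cases ht : t ∈ lowerBounds (LsetM X (v ∘ f) (v z))
    · exact Or.inr (H t ht)
    · exact Or.inl ht

lemma def_glbLset (hlt : (univ : Set M).Definable L {p : Fin 2 → M | p 0 < p 1})
    {X : Set ((ι ⊕ Fin 1) → M)} (hX : (univ : Set M).Definable L X) (f : ι → κ) (z i : κ) :
    (univ : Set M).Definable L (glbLset X f z i) :=
  (def_lbLset hlt hX _ _ _).inter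
    (def_AllSet (((def_lbLset hlt hX _ _ _).compl).union (def_leSet hlt _ _)))

/-- `(DsetM X x ∩ Ioi c).Nonempty` -/
def SplusSet (X : Set ((ι ⊕ Fin 1) → M)) (c : M) : Set (ι → M) :=
  ExSet (DsetPSet X Sum.inl (Sum.inr 0) ∩ {w : (ι ⊕ Fin 1) → M | c < w (Sum.inr 0)})

lemma mem_SplusSet (X : Set ((ι ⊕ Fin 1) → M)) (c : M) (x : ι → M) :
    x ∈ SplusSet X c ↔ (DsetM X x ∩ Ioi c).Nonempty := by
  rw [SplusSet]
  constructor
  · rintro ⟨t, ht1, ht2⟩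
    rw [mem_DsetPSet] at ht1
    exact ⟨t, ht1, ht2⟩
  · rintro ⟨t, ht1, ht2⟩
    refine ⟨t, ?_, ht2⟩
    rw [mem_DsetPSet]
    exact ht1

lemma def_SplusSet (hlt : (univ : Set M).Definable L {p : Fin 2 → M | p 0 < p 1})
    {X : Set ((ι ⊕ Fin 1) → M)} (hX : (univ : Set M).Definable L X) (c : M) :
    (univ : Set M).Definable L (SplusSet X c) :=
  def_ExSet ((def_DsetPSet hlt hX _ _).inter (def_ltcSet hlt c _))

/-- `(DsetM X x ∩ Iio c).Nonempty` -/
def SminusSet (X : Set ((ι ⊕ Fin 1) → M)) (c : M) : Set (ι → M) :=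
  ExSet (DsetPSet X Sum.inl (Sum.inr 0) ∩ {w : (ι ⊕ Fin 1) → M | w (Sum.inr 0) < c})

lemma mem_SminusSet (X : Set ((ι ⊕ Fin 1) → M)) (c : M) (x : ι → M) :
    x ∈ SminusSet X c ↔ (DsetM X x ∩ Iio c).Nonempty := by
  rw [SminusSet]
  constructor
  · rintro ⟨t, ht1, ht2⟩
    rw [mem_DsetPSet] at ht1
    exact ⟨t, ht1, ht2⟩
  · rintro ⟨t, ht1, ht2⟩
    refine ⟨t, ?_, ht2⟩
    rw [mem_DsetPSet]
    exact ht1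

lemma def_SminusSet (hlt : (univ : Set M).Definable L {p : Fin 2 → M | p 0 < p 1})
    {X : Set ((ι ⊕ Fin 1) → M)} (hX : (univ : Set M).Definable L X) (c : M) :
    (univ : Set M).Definable L (SminusSet X c) :=
  def_ExSet ((def_DsetPSet hlt hX _ _).inter (def_gtcSet hlt c _))

/-- `∃ z u, IsGLB (DsetM X x ∩ Ioi c) z ∧ u ∈ upperBounds (RsetM X x z)` -/
def BplusSet (X : Set ((ι ⊕ Fin 1) → M)) (c : M) : Set (ι → M) :=
  ExSet (ExSet (glbDIset X c (Sum.inl ∘ Sum.inl) (Sum.inl (Sum.inr 0)) ∩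
    ubRset X (Sum.inl ∘ Sum.inl) (Sum.inl (Sum.inr 0)) (Sum.inr 0)))

lemma mem_BplusSet (X : Set ((ι ⊕ Fin 1) → M)) (c : M) (x : ι → M) :
    x ∈ BplusSet X c ↔
      ∃ z u, IsGLB (DsetM X x ∩ Ioi c) z ∧ u ∈ upperBounds (RsetM X x z) := by
  rw [BplusSet]
  constructor
  · rintro ⟨z, u, h1, h2⟩
    rw [mem_glbDIset] at h1
    rw [mem_ubRset] at h2
    exact ⟨z, u, h1, h2⟩
  · rintro ⟨z, u, h1, h2⟩
    refine ⟨z, u, ?_, ?_⟩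
    · rw [mem_glbDIset]; exact h1
    · rw [mem_ubRset]; exact h2

lemma def_BplusSet (hlt : (univ : Set M).Definable L {p : Fin 2 → M | p 0 < p 1})
    {X : Set ((ι ⊕ Fin 1) → M)} (hX : (univ : Set M).Definable L X) (c : M) :
    (univ : Set M).Definable L (BplusSet X c) :=
  def_ExSet (def_ExSet ((def_glbDIset hlt hX c _ _).inter (def_ubRset hlt hX _ _ _)))

/-- `∃ z u, IsLUB (DsetM X x ∩ Iio c) z ∧ u ∈ lowerBounds (LsetM X x z)` -/
def BminusSet (X : Set ((ι ⊕ Fin 1) → M)) (c : M) : Set (ι → M) :=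
  ExSet (ExSet (lubDIset X c (Sum.inl ∘ Sum.inl) (Sum.inl (Sum.inr 0)) ∩
    lbLset X (Sum.inl ∘ Sum.inl) (Sum.inl (Sum.inr 0)) (Sum.inr 0)))

lemma mem_BminusSet (X : Set ((ι ⊕ Fin 1) → M)) (c : M) (x : ι → M) :
    x ∈ BminusSet X c ↔
      ∃ z u, IsLUB (DsetM X x ∩ Iio c) z ∧ u ∈ lowerBounds (LsetM X x z) := by
  rw [BminusSet]
  constructor
  · rintro ⟨z, u, h1, h2⟩
    rw [mem_lubDIset] at h1
    rw [mem_lbLset] at h2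
    exact ⟨z, u, h1, h2⟩
  · rintro ⟨z, u, h1, h2⟩
    refine ⟨z, u, ?_, ?_⟩
    · rw [mem_lubDIset]; exact h1
    · rw [mem_lbLset]; exact h2

lemma def_BminusSet (hlt : (univ : Set M).Definable L {p : Fin 2 → M | p 0 < p 1})
    {X : Set ((ι ⊕ Fin 1) → M)} (hX : (univ : Set M).Definable L X) (c : M) :
    (univ : Set M).Definable L (BminusSet X c) :=
  def_ExSet (def_ExSet ((def_lubDIset hlt hX c _ _).inter (def_lbLset hlt hX _ _ _)))

end FormulaSets3

section Def1

variable {L : FirstOrder.Language} {M : Type*} [L.Structure M] [LinearOrder M]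
  [TopologicalSpace M] [OrderTopology M] [DenselyOrdered M] [NoMinOrder M] [NoMaxOrder M]
variable {ι : Type*}

lemma def1_fib {X : Set ((ι ⊕ Fin 1) → M)} (hX : (univ : Set M).Definable L X) (x : ι → M) :
    (univ : Set M).Definable₁ L (fibF X x) := by
  have h := def_section hX x
  rw [Definable₁]
  convert h using 1
  ext v
  have hv : Sum.elim x v = insF x (v 0) := by
    funext z
    rcases z with i | j
    · rfl
    · simp [insF, Subsingleton.elim j 0]
  simp only [mem_setOf_eq, hv]
  exact Iff.rfl

lemma def1_DIplus (hlt : (univ : Set M).Definable L {p : Fin 2 → M | p 0 < p 1})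
    {X : Set ((ι ⊕ Fin 1) → M)} (hX : (univ : Set M).Definable L X) (c : M) (x : ι → M) :
    (univ : Set M).Definable₁ L (DsetM X x ∩ Ioi c) := by
  have h := def_section ((def_DsetPSet hlt hX (Sum.inl : ι → ι ⊕ Fin 1) (Sum.inr 0)).inter
    (def_ltcSet hlt c (Sum.inr 0))) x
  rw [Definable₁]
  have heq : {v : Fin 1 → M | v 0 ∈ DsetM X x ∩ Ioi c} =
      {v : Fin 1 → M | Sum.elim x v ∈ DsetPSet X Sum.inl (Sum.inr 0) ∩
        {w | c < w (Sum.inr 0)}} := by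
    ext v
    rw [mem_setOf_eq, mem_setOf_eq, mem_inter_iff, mem_inter_iff, mem_DsetPSet]
    exact Iff.rfl
  rw [heq]
  exact h

lemma def1_DIminus (hlt : (univ : Set M).Definable L {p : Fin 2 → M | p 0 < p 1})
    {X : Set ((ι ⊕ Fin 1) → M)} (hX : (univ : Set M).Definable L X) (c : M) (x : ι → M) :
    (univ : Set M).Definable₁ L (DsetM X x ∩ Iio c) := by
  have h := def_section ((def_DsetPSet hlt hX (Sum.inl : ι → ι ⊕ Fin 1) (Sum.inr 0)).inter
    (def_gtcSet hlt c (Sum.inr 0))) x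
  rw [Definable₁]
  have heq : {v : Fin 1 → M | v 0 ∈ DsetM X x ∩ Iio c} =
      {v : Fin 1 → M | Sum.elim x v ∈ DsetPSet X Sum.inl (Sum.inr 0) ∩
        {w | w (Sum.inr 0) < c}} := by
    ext v
    rw [mem_setOf_eq, mem_setOf_eq, mem_inter_iff, mem_inter_iff, mem_DsetPSet]
    exact Iff.rfl
  rw [heq]
  exact h

lemma def1_Rset (hlt : (univ : Set M).Definable L {p : Fin 2 → M | p 0 < p 1})
    {X : Set ((ι ⊕ Fin 1) → M)} (hX : (univ : Set M).Definable L X) (x : ι → M) (z : M) :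
    (univ : Set M).Definable₁ L (RsetM X x z) := by
  have h := def_section (def_RmemSet hlt hX
    ((Sum.inl ∘ Sum.inl : ι → (ι ⊕ Fin 1) ⊕ Fin 1))
    (Sum.inl (Sum.inr 0)) (Sum.inr 0)) (Sum.elim x (fun _ : Fin 1 => z))
  rw [Definable₁]
  have heq : {v : Fin 1 → M | v 0 ∈ RsetM X x z} =
      {v : Fin 1 → M | Sum.elim (Sum.elim x (fun _ : Fin 1 => z)) v ∈
        RmemSet X (Sum.inl ∘ Sum.inl) (Sum.inl (Sum.inr 0)) (Sum.inr 0)} := by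
    ext v
    rw [mem_setOf_eq, mem_setOf_eq, mem_RmemSet]
    exact Iff.rfl
  rw [heq]
  exact h

lemma def1_Lset (hlt : (univ : Set M).Definable L {p : Fin 2 → M | p 0 < p 1})
    {X : Set ((ι ⊕ Fin 1) → M)} (hX : (univ : Set M).Definable L X) (x : ι → M) (z : M) :
    (univ : Set M).Definable₁ L (LsetM X x z) := by
  have h := def_section (def_LmemSet hlt hX
    ((Sum.inl ∘ Sum.inl : ι → (ι ⊕ Fin 1) ⊕ Fin 1))
    (Sum.inl (Sum.inr 0)) (Sum.inr 0)) (Sum.elim x (fun _ : Fin 1 => z))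
  rw [Definable₁]
  have heq : {v : Fin 1 → M | v 0 ∈ LsetM X x z} =
      {v : Fin 1 → M | Sum.elim (Sum.elim x (fun _ : Fin 1 => z)) v ∈
        LmemSet X (Sum.inl ∘ Sum.inl) (Sum.inl (Sum.inr 0)) (Sum.inr 0)} := by
    ext v
    rw [mem_setOf_eq, mem_setOf_eq, mem_LmemSet]
    exact Iff.rfl
  rw [heq]
  exact h

end Def1

section ONE

variable {L : FirstOrder.Language} {M : Type*} [L.Structure M] [Nonempty M] [LinearOrder M]
  [DenselyOrdered M] [NoMinOrder M] [NoMaxOrder M] [TopologicalSpace M] [OrderTopology M]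

lemma lemma_one {ι : Type} [Fintype ι]
    (hlt : OrderDefinable L M) (hlo : IsLocallyOMinimal L M)
    (hdc : IsDefinablyComplete L M) (hb : PropertyB L M) (hc : PropertyC L M)
    (X : Set ((ι ⊕ Fin 1) → M)) (hX : (univ : Set M).Definable L X)
    (hS : (interior {x : ι → M | (interior (fibF X x)).Nonempty}).Nonempty) :
    (interior X).Nonempty := by
  classical
  obtain ⟨c⟩ := (inferInstance : Nonempty M)
  rw [OrderDefinable] at hlt
  -- S is covered by the two half-sided sets
  have hcover : {x : ι → M | (interior (fibF X x)).Nonempty} ⊆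
      SplusSet X c ∪ SminusSet X c := by
    intro x hx
    rw [mem_union, mem_SplusSet, mem_SminusSet]
    obtain ⟨d, hd⟩ := hx
    rcases lt_trichotomy d c with hdc' | hdc' | hdc'
    · exact Or.inr ⟨d, (DsetM_eq_interior X x).symm ▸ hd, hdc'⟩
    · -- d = c : pick a point of the open set below c
      subst hdc'
      have hd2 : d ∈ interior (interior (fibF X x)) := by
        rwa [interior_interior]
      obtain ⟨p, q, hp, hq, hsub'⟩ := mem_interior_iff_Ioo.1 hd2
      obtain ⟨e, he⟩ := exists_between hp
      have heD : e ∈ DsetM X x := by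
        rw [DsetM_eq_interior]
        exact hsub' ⟨he.1, lt_trans he.2 hq⟩
      exact Or.inr ⟨e, heD, he.2⟩
    · exact Or.inl ⟨d, (DsetM_eq_interior X x).symm ▸ hd, hdc'⟩
  have hSint : (interior (SplusSet X c ∪ SminusSet X c)).Nonempty := by
    obtain ⟨x, hx⟩ := hS
    exact ⟨x, interior_mono hcover hx⟩
  -- facts about glb/lub choices
  have hDfib : ∀ x : ι → M, DsetM X x ⊆ fibF X x := by
    intro x
    rw [DsetM_eq_interior]
    exact interior_subset
  rcases propertyB' hb _ _ (def_SplusSet hlt hX c) (def_SminusSet hlt hX c) hSint with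
    hP | hP
  · -- ======== PLUS side ========
    set ga : (ι → M) → M :=
      fun x => if h : ∃ z, IsGLB (DsetM X x ∩ Ioi c) z then h.choose else c with hga
    have hga_spec : ∀ x ∈ SplusSet X c, IsGLB (DsetM X x ∩ Ioi c) (ga x) := by
      intro x hx
      rw [mem_SplusSet] at hx
      have hex : ∃ z, IsGLB (DsetM X x ∩ Ioi c) z :=
        (hdc _ (def1_DIplus hlt hX c x) hx).2 ⟨c, fun y hy => le_of_lt hy.2⟩
      have hgax : ga x = hex.choose := by rw [hga]; exact dif_pos hex
      rw [hgax]
      exact hex.choose_spec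
    have hnotmem : ∀ x ∈ SplusSet X c, ga x ∉ DsetM X x ∩ Ioi c := by
      intro x hx hmem
      have hEopen : IsOpen (DsetM X x ∩ Ioi c) := by
        rw [DsetM_eq_interior]
        exact isOpen_interior.inter isOpen_Ioi
      have hmem2 : ga x ∈ interior (DsetM X x ∩ Ioi c) := by
        rwa [hEopen.interior_eq]
      obtain ⟨p, q, hp, hq, hsub'⟩ := mem_interior_iff_Ioo.1 hmem2
      obtain ⟨e, he⟩ := exists_between hp
      have heE := hsub' ⟨he.1, lt_trans he.2 hq⟩
      exact absurd ((hga_spec x hx).1 heE) (not_le.2 he.2)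
    have hkey : ∀ x ∈ SplusSet X c, ∃ t, ga x < t ∧ Ioo (ga x) t ⊆ fibF X x := by
      intro x hx
      apply attach_right hlo (def1_fib hX x)
      intro s hs
      have hnlb : ¬ s ∈ lowerBounds (DsetM X x ∩ Ioi c) := fun hlb =>
        absurd ((hga_spec x hx).2 hlb) (not_le.2 hs)
      rw [mem_lowerBounds] at hnlb
      push_neg at hnlb
      obtain ⟨e, heE, hes⟩ := hnlb
      have hge : ga x ≤ e := (hga_spec x hx).1 heE
      have hne : ga x ≠ e := fun h => hnotmem x hx (h ▸ heE)
      exact ⟨e, hDfib x heE.1, lt_of_le_of_ne hge hne, hes⟩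
    have hRne : ∀ x ∈ SplusSet X c, (RsetM X x (ga x)).Nonempty := by
      intro x hx
      obtain ⟨t, ht1, ht2⟩ := hkey x hx
      exact ⟨t, ht1, ht2⟩
    -- split by boundedness
    have hsplitint : (interior ((SplusSet X c ∩ BplusSet X c) ∪
        (SplusSet X c \ BplusSet X c))).Nonempty := by
      rwa [inter_union_diff]
    rcases propertyB' hb _ _ ((def_SplusSet hlt hX c).inter (def_BplusSet hlt hX c))
      ((def_SplusSet hlt hX c).sdiff (def_BplusSet hlt hX c)) hsplitint with hQ | hQ
    · -- bounded case
      set A := SplusSet X c ∩ BplusSet X c with hA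
      set gr : (ι → M) → M :=
        fun x => if h : ∃ z, IsLUB (RsetM X x (ga x)) z then h.choose else c with hgr
      have hgr_spec : ∀ x ∈ A, IsLUB (RsetM X x (ga x)) (gr x) := by
        rintro x ⟨hx1, hx2⟩
        rw [mem_BplusSet X c x] at hx2
        obtain ⟨z, u, hz, hu⟩ := hx2
        have hzga : z = ga x := hz.unique (hga_spec x hx1)
        have hbdd : BddAbove (RsetM X x (ga x)) := ⟨u, hzga ▸ hu⟩
        have hex : ∃ z, IsLUB (RsetM X x (ga x)) z :=
          (hdc _ (def1_Rset hlt hX x (ga x)) (hRne x hx1)).1 hbdd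
        have hgrx : gr x = hex.choose := by rw [hgr]; exact dif_pos hex
        rw [hgrx]
        exact hex.choose_spec
      have hsub2 : ∀ x ∈ A, ga x < gr x ∧ Ioo (ga x) (gr x) ⊆ fibF X x := by
        intro x hx
        obtain ⟨t0, ht0⟩ := hkey x hx.1
        have h1 : ga x < gr x :=
          lt_of_lt_of_le ht0.1 ((hgr_spec x hx).1 ⟨ht0.1, ht0.2⟩)
        refine ⟨h1, ?_⟩
        intro w hw
        have hnub : ¬ w ∈ upperBounds (RsetM X x (ga x)) := fun hub =>
          absurd ((hgr_spec x hx).2 hub) (not_le.2 hw.2)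
        rw [mem_upperBounds] at hnub
        push_neg at hnub
        obtain ⟨t, htR, hwt⟩ := hnub
        exact htR.2 ⟨hw.1, hwt⟩
      have hAdef : (univ : Set M).Definable L A :=
        (def_SplusSet hlt hX c).inter (def_BplusSet hlt hX c)
      have hΓ : (univ : Set M).Definable L
          {p : ι ⊕ Fin 2 → M | (p ∘ Sum.inl) ∈ A ∧
            p ∘ Sum.inr = (fun x => ![ga x, gr x]) (p ∘ Sum.inl)} := by
        have hΓeq : {p : ι ⊕ Fin 2 → M | (p ∘ Sum.inl) ∈ A ∧
            p ∘ Sum.inr = (fun x => ![ga x, gr x]) (p ∘ Sum.inl)} =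
            subSet Sum.inl A ∩ glbDIset X c Sum.inl (Sum.inr 0) ∩
              lubRset X Sum.inl (Sum.inr 0) (Sum.inr 1) := by
          ext p
          simp only [mem_setOf_eq, mem_inter_iff, mem_subSet, mem_glbDIset, mem_lubRset]
          constructor
          · rintro ⟨hp1, hp2⟩
            have h0 : p (Sum.inr 0) = ga (p ∘ Sum.inl) := by
              have := congrFun hp2 0
              simpa using this
            have h1 : p (Sum.inr 1) = gr (p ∘ Sum.inl) := by
              have := congrFun hp2 1
              simpa using this
            refine ⟨⟨hp1, ?_⟩, ?_⟩
            · rw [h0]; exact hga_spec _ hp1.1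
            · rw [h0, h1]; exact hgr_spec _ hp1
          · rintro ⟨⟨hp1, hglb⟩, hlub⟩
            have h0 : p (Sum.inr 0) = ga (p ∘ Sum.inl) :=
              hglb.unique (hga_spec _ hp1.1)
            have h1 : p (Sum.inr 1) = gr (p ∘ Sum.inl) := by
              apply IsLUB.unique _ (hgr_spec _ hp1)
              rwa [← h0]
            refine ⟨hp1, ?_⟩
            funext j
            fin_cases j
            · simpa using h0
            · simpa using h1
        rw [hΓeq]
        exact ((def_subSet _ hAdef).inter (def_glbDIset hlt hX c _ _)).inter
          (def_lubRset hlt hX _ _ _)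
      exact FINpair hc X A hAdef hQ ga gr hΓ hsub2
    · -- unbounded case
      set A := SplusSet X c \ BplusSet X c with hA
      have hray : ∀ x ∈ A, Ioi (ga x) ⊆ fibF X x := by
        intro x hx w hw
        have hnub : ¬ w ∈ upperBounds (RsetM X x (ga x)) := by
          intro hub
          exact hx.2 ((mem_BplusSet X c x).2 ⟨ga x, w, hga_spec x hx.1, hub⟩)
        rw [mem_upperBounds] at hnub
        push_neg at hnub
        obtain ⟨t, htR, hwt⟩ := hnub
        exact htR.2 ⟨hw, hwt⟩
      have hAdef : (univ : Set M).Definable L A :=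
        (def_SplusSet hlt hX c).sdiff (def_BplusSet hlt hX c)
      have hΓ : (univ : Set M).Definable L
          {p : ι ⊕ Fin 1 → M | (p ∘ Sum.inl) ∈ A ∧
            p ∘ Sum.inr = (fun x => ![ga x]) (p ∘ Sum.inl)} := by
        have hΓeq : {p : ι ⊕ Fin 1 → M | (p ∘ Sum.inl) ∈ A ∧
            p ∘ Sum.inr = (fun x => ![ga x]) (p ∘ Sum.inl)} =
            subSet Sum.inl A ∩ glbDIset X c Sum.inl (Sum.inr 0) := by
          ext p
          simp only [mem_setOf_eq, mem_inter_iff, mem_subSet, mem_glbDIset]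
          constructor
          · rintro ⟨hp1, hp2⟩
            have h0 : p (Sum.inr 0) = ga (p ∘ Sum.inl) := by
              have := congrFun hp2 0
              simpa using this
            refine ⟨hp1, ?_⟩
            rw [h0]; exact hga_spec _ hp1.1
          · rintro ⟨hp1, hglb⟩
            have h0 : p (Sum.inr 0) = ga (p ∘ Sum.inl) :=
              hglb.unique (hga_spec _ hp1.1)
            refine ⟨hp1, ?_⟩
            funext j
            have hj : j = 0 := Subsingleton.elim j 0
            subst hj
            simpa using h0
        rw [hΓeq]
        exact (def_subSet _ hAdef).inter (def_glbDIset hlt hX c _ _)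
      exact FINray hc X A hAdef hQ ga hΓ hray
  · -- ======== MINUS side ========
    set gb : (ι → M) → M :=
      fun x => if h : ∃ z, IsLUB (DsetM X x ∩ Iio c) z then h.choose else c with hgb
    have hgb_spec : ∀ x ∈ SminusSet X c, IsLUB (DsetM X x ∩ Iio c) (gb x) := by
      intro x hx
      rw [mem_SminusSet] at hx
      have hex : ∃ z, IsLUB (DsetM X x ∩ Iio c) z :=
        (hdc _ (def1_DIminus hlt hX c x) hx).1 ⟨c, fun y hy => le_of_lt hy.2⟩
      have hgbx : gb x = hex.choose := by rw [hgb]; exact dif_pos hex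
      rw [hgbx]
      exact hex.choose_spec
    have hnotmem : ∀ x ∈ SminusSet X c, gb x ∉ DsetM X x ∩ Iio c := by
      intro x hx hmem
      have hEopen : IsOpen (DsetM X x ∩ Iio c) := by
        rw [DsetM_eq_interior]
        exact isOpen_interior.inter isOpen_Iio
      have hmem2 : gb x ∈ interior (DsetM X x ∩ Iio c) := by
        rwa [hEopen.interior_eq]
      obtain ⟨p, q, hp, hq, hsub'⟩ := mem_interior_iff_Ioo.1 hmem2
      obtain ⟨e, he⟩ := exists_between hq
      have heE := hsub' ⟨lt_trans hp he.1, he.2⟩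
      exact absurd ((hgb_spec x hx).1 heE) (not_le.2 he.1)
    have hkey : ∀ x ∈ SminusSet X c, ∃ t, t < gb x ∧ Ioo t (gb x) ⊆ fibF X x := by
      intro x hx
      apply attach_left hlo (def1_fib hX x)
      intro s hs
      have hnub : ¬ s ∈ upperBounds (DsetM X x ∩ Iio c) := fun hub =>
        absurd ((hgb_spec x hx).2 hub) (not_le.2 hs)
      rw [mem_upperBounds] at hnub
      push_neg at hnub
      obtain ⟨e, heE, hes⟩ := hnub
      have hge : e ≤ gb x := (hgb_spec x hx).1 heE
      have hne : e ≠ gb x := fun h => hnotmem x hx (h ▸ heE)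
      exact ⟨e, hDfib x heE.1, hes, lt_of_le_of_ne hge hne⟩
    have hLne : ∀ x ∈ SminusSet X c, (LsetM X x (gb x)).Nonempty := by
      intro x hx
      obtain ⟨t, ht1, ht2⟩ := hkey x hx
      exact ⟨t, ht1, ht2⟩
    have hsplitint : (interior ((SminusSet X c ∩ BminusSet X c) ∪
        (SminusSet X c \ BminusSet X c))).Nonempty := by
      rwa [inter_union_diff]
    rcases propertyB' hb _ _ ((def_SminusSet hlt hX c).inter (def_BminusSet hlt hX c))
      ((def_SminusSet hlt hX c).sdiff (def_BminusSet hlt hX c)) hsplitint with hQ | hQ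
    · -- bounded case
      set A := SminusSet X c ∩ BminusSet X c with hA
      set gl : (ι → M) → M :=
        fun x => if h : ∃ z, IsGLB (LsetM X x (gb x)) z then h.choose else c with hgl
      have hgl_spec : ∀ x ∈ A, IsGLB (LsetM X x (gb x)) (gl x) := by
        rintro x ⟨hx1, hx2⟩
        rw [mem_BminusSet X c x] at hx2
        obtain ⟨z, u, hz, hu⟩ := hx2
        have hzgb : z = gb x := hz.unique (hgb_spec x hx1)
        have hbdd : BddBelow (LsetM X x (gb x)) := ⟨u, hzgb ▸ hu⟩
        have hex : ∃ z, IsGLB (LsetM X x (gb x)) z :=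
          (hdc _ (def1_Lset hlt hX x (gb x)) (hLne x hx1)).2 hbdd
        have hglx : gl x = hex.choose := by rw [hgl]; exact dif_pos hex
        rw [hglx]
        exact hex.choose_spec
      have hsub2 : ∀ x ∈ A, gl x < gb x ∧ Ioo (gl x) (gb x) ⊆ fibF X x := by
        intro x hx
        obtain ⟨t0, ht0⟩ := hkey x hx.1
        have h1 : gl x < gb x :=
          lt_of_le_of_lt ((hgl_spec x hx).1 ⟨ht0.1, ht0.2⟩) ht0.1
        refine ⟨h1, ?_⟩
        intro w hw
        have hnlb : ¬ w ∈ lowerBounds (LsetM X x (gb x)) := fun hlb =>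
          absurd ((hgl_spec x hx).2 hlb) (not_le.2 hw.1)
        rw [mem_lowerBounds] at hnlb
        push_neg at hnlb
        obtain ⟨t, htR, hwt⟩ := hnlb
        exact htR.2 ⟨hwt, hw.2⟩
      have hAdef : (univ : Set M).Definable L A :=
        (def_SminusSet hlt hX c).inter (def_BminusSet hlt hX c)
      have hΓ : (univ : Set M).Definable L
          {p : ι ⊕ Fin 2 → M | (p ∘ Sum.inl) ∈ A ∧
            p ∘ Sum.inr = (fun x => ![gl x, gb x]) (p ∘ Sum.inl)} := by
        have hΓeq : {p : ι ⊕ Fin 2 → M | (p ∘ Sum.inl) ∈ A ∧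
            p ∘ Sum.inr = (fun x => ![gl x, gb x]) (p ∘ Sum.inl)} =
            subSet Sum.inl A ∩ lubDIset X c Sum.inl (Sum.inr 1) ∩
              glbLset X Sum.inl (Sum.inr 1) (Sum.inr 0) := by
          ext p
          simp only [mem_setOf_eq, mem_inter_iff, mem_subSet, mem_lubDIset, mem_glbLset]
          constructor
          · rintro ⟨hp1, hp2⟩
            have h0 : p (Sum.inr 0) = gl (p ∘ Sum.inl) := by
              have := congrFun hp2 0
              simpa using this
            have h1 : p (Sum.inr 1) = gb (p ∘ Sum.inl) := by
              have := congrFun hp2 1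
              simpa using this
            refine ⟨⟨hp1, ?_⟩, ?_⟩
            · rw [h1]; exact hgb_spec _ hp1.1
            · rw [h0, h1]; exact hgl_spec _ hp1
          · rintro ⟨⟨hp1, hlub⟩, hglb⟩
            have h1 : p (Sum.inr 1) = gb (p ∘ Sum.inl) :=
              hlub.unique (hgb_spec _ hp1.1)
            have h0 : p (Sum.inr 0) = gl (p ∘ Sum.inl) := by
              apply IsGLB.unique _ (hgl_spec _ hp1)
              rwa [← h1]
            refine ⟨hp1, ?_⟩
            funext j
            fin_cases j
            · simpa using h0
            · simpa using h1
        rw [hΓeq]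
        exact ((def_subSet _ hAdef).inter (def_lubDIset hlt hX c _ _)).inter
          (def_glbLset hlt hX _ _ _)
      exact FINpair hc X A hAdef hQ gl gb hΓ hsub2
    · -- unbounded case
      set A := SminusSet X c \ BminusSet X c with hA
      have hray : ∀ x ∈ A, Iio (gb x) ⊆ fibF X x := by
        intro x hx w hw
        have hnlb : ¬ w ∈ lowerBounds (LsetM X x (gb x)) := by
          intro hlb
          exact hx.2 ((mem_BminusSet X c x).2 ⟨gb x, w, hgb_spec x hx.1, hlb⟩)
        rw [mem_lowerBounds] at hnlb
        push_neg at hnlb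
        obtain ⟨t, htR, hwt⟩ := hnlb
        exact htR.2 ⟨hwt, hw⟩
      have hAdef : (univ : Set M).Definable L A :=
        (def_SminusSet hlt hX c).sdiff (def_BminusSet hlt hX c)
      have hΓ : (univ : Set M).Definable L
          {p : ι ⊕ Fin 1 → M | (p ∘ Sum.inl) ∈ A ∧
            p ∘ Sum.inr = (fun x => ![gb x]) (p ∘ Sum.inl)} := by
        have hΓeq : {p : ι ⊕ Fin 1 → M | (p ∘ Sum.inl) ∈ A ∧
            p ∘ Sum.inr = (fun x => ![gb x]) (p ∘ Sum.inl)} =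
            subSet Sum.inl A ∩ lubDIset X c Sum.inl (Sum.inr 0) := by
          ext p
          simp only [mem_setOf_eq, mem_inter_iff, mem_subSet, mem_lubDIset]
          constructor
          · rintro ⟨hp1, hp2⟩
            have h0 : p (Sum.inr 0) = gb (p ∘ Sum.inl) := by
              have := congrFun hp2 0
              simpa using this
            refine ⟨hp1, ?_⟩
            rw [h0]; exact hgb_spec _ hp1.1
          · rintro ⟨hp1, hlub⟩
            have h0 : p (Sum.inr 0) = gb (p ∘ Sum.inl) :=
              hlub.unique (hgb_spec _ hp1.1)
            refine ⟨hp1, ?_⟩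
            funext j
            have hj : j = 0 := Subsingleton.elim j 0
            subst hj
            simpa using h0
        rw [hΓeq]
        exact (def_subSet _ hAdef).inter (def_lubDIset hlt hX c _ _)
      exact FINray' hc X A hAdef hQ gb hΓ hray

end ONE

section KEY

variable {L : FirstOrder.Language} {M : Type*} [L.Structure M] [Nonempty M] [LinearOrder M]
  [DenselyOrdered M] [NoMinOrder M] [NoMaxOrder M] [TopologicalSpace M] [OrderTopology M]

lemma key_lemma {ι : Type} [Fintype ι]
    (hlt : OrderDefinable L M) (hlo : IsLocallyOMinimal L M)
    (hdc : IsDefinablyComplete L M) (hb : PropertyB L M) (hc : PropertyC L M) :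
    ∀ (n : ℕ) (X : Set ((ι ⊕ Fin n) → M)), (univ : Set M).Definable L X →
      (interior {x : ι → M |
        (interior {y : Fin n → M | Sum.elim x y ∈ X}).Nonempty}).Nonempty →
      (interior X).Nonempty := by
  intro n
  induction n with
  | zero =>
    intro X _ hS
    set H : (ι → M) ≃ₜ ((ι ⊕ Fin 0) → M) :=
      { toFun := fun x => Sum.elim x (fun j : Fin 0 => j.elim0)
        invFun := fun v => v ∘ Sum.inl
        left_inv := fun x => rfl
        right_inv := fun v => by
          funext z
          rcases z with i | j
          · rfl
          · exact j.elim0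
        continuous_toFun := by
          apply continuous_pi
          intro z
          rcases z with i | j
          · exact continuous_apply i
          · exact j.elim0
        continuous_invFun := continuous_pi (fun i => continuous_apply (Sum.inl i)) } with hH
    have hkey : {x : ι → M |
        (interior {y : Fin 0 → M | Sum.elim x y ∈ X}).Nonempty} ⊆ H ⁻¹' X := by
      intro x hx
      obtain ⟨y, hy⟩ := hx
      have h1 := interior_subset hy
      have h2 : (fun j : Fin 0 => j.elim0) = y := Subsingleton.elim _ _
      simpa [hH, h2] using h1
    obtain ⟨x0, hx0⟩ := hS
    have hx0' : x0 ∈ interior (H ⁻¹' X) := interior_mono hkey hx0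
    rw [← Homeomorph.preimage_interior] at hx0'
    exact ⟨H x0, hx0'⟩
  | succ n IH =>
    intro X hX hS
    set J : ((ι ⊕ Fin n) ⊕ Fin 1) ≃ (ι ⊕ Fin (n + 1)) :=
      (Equiv.sumAssoc ι (Fin n) (Fin 1)).trans
        ((Equiv.refl ι).sumCongr finSumFinEquiv) with hJ
    set X' : Set (((ι ⊕ Fin n) ⊕ Fin 1) → M) := subSet (⇑J.symm) X with hX'def
    have hX' : (univ : Set M).Definable L X' := def_subSet _ hX
    -- key coordinate computation
    have hJsymm : ∀ z : ι ⊕ Fin (n + 1), J.symm z =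
        Sum.elim (fun i : ι => Sum.inl (Sum.inl i))
          (fun j : Fin (n + 1) => Sum.elim (fun j' : Fin n => Sum.inl (Sum.inr j'))
            (fun j'' : Fin 1 => Sum.inr j'') (finSumFinEquiv.symm j)) z := by
      intro z
      rcases z with i | j
      · simp [hJ, Equiv.sumAssoc]
      · simp only [hJ, Equiv.symm_trans_apply, Equiv.sumCongr_symm, Equiv.refl_symm,
          Equiv.sumCongr_apply, Sum.map_inr, Sum.elim_inr]
        rcases h : finSumFinEquiv.symm j with j' | j''
        · simp [Equiv.sumAssoc]
        · simp [Equiv.sumAssoc]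
    have hcomp : ∀ (x : ι → M) (y : Fin n → M) (t : M),
        (insF (Sum.elim x y) t) ∘ ⇑J.symm =
          Sum.elim x (fun j : Fin (n + 1) =>
            Sum.elim y (fun _ : Fin 1 => t) (finSumFinEquiv.symm j)) := by
      intro x y t
      funext z
      rw [Function.comp_apply, hJsymm]
      rcases z with i | j
      · rfl
      · simp only [Sum.elim_inr]
        rcases h : finSumFinEquiv.symm j with j' | j''
        · rfl
        · rfl
    -- the set T of fibers of X' with nonempty interior, as a definable set
    set T : Set ((ι ⊕ Fin n) → M) :=
      ExSet (ExSet ({w : (((ι ⊕ Fin n) ⊕ Fin 1) ⊕ Fin 1) → M |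
        w (Sum.inl (Sum.inr 0)) < w (Sum.inr 0)} ∩
        IooSubSet X' (Sum.inl ∘ Sum.inl) (Sum.inl (Sum.inr 0)) (Sum.inr 0))) with hT
    have hTmem : ∀ z : (ι ⊕ Fin n) → M,
        z ∈ T ↔ (interior (fibF X' z)).Nonempty := by
      intro z
      rw [nonempty_interior_iff_Ioo, hT]
      constructor
      · rintro ⟨p, q, hpq, hIoo⟩
        rw [mem_IooSubSet] at hIoo
        exact ⟨p, q, hpq, hIoo⟩
      · rintro ⟨p, q, hpq, hIoo⟩
        refine ⟨p, q, hpq, ?_⟩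
        rw [mem_IooSubSet]
        exact hIoo
    have hTdef : (univ : Set M).Definable L T :=
      def_ExSet (def_ExSet ((def_ltSet hlt _ _).inter (def_IooSubSet hlt hX' _ _ _)))
    -- the S-set of T contains the S-set of X
    have hSsub : {x : ι → M |
        (interior {y : Fin (n + 1) → M | Sum.elim x y ∈ X}).Nonempty} ⊆
        {x : ι → M | (interior {y : Fin n → M | Sum.elim x y ∈ T}).Nonempty} := by
      intro x hx
      obtain ⟨p, q, hpq, hbox⟩ := exists_box_subset hx
      set pL : Fin n → M := fun i => p (finSumFinEquiv (Sum.inl i)) with hpL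
      set qL : Fin n → M := fun i => q (finSumFinEquiv (Sum.inl i)) with hqL
      have hboxsub : {y : Fin n → M | ∀ i, y i ∈ Ioo (pL i) (qL i)} ⊆
          {y : Fin n → M | Sum.elim x y ∈ T} := by
        intro y hy
        rw [mem_setOf_eq, hTmem]
        rw [nonempty_interior_iff_Ioo]
        refine ⟨p (finSumFinEquiv (Sum.inr 0)), q (finSumFinEquiv (Sum.inr 0)),
          hpq _, ?_⟩
        intro t ht
        have hmem : (fun j : Fin (n + 1) =>
            Sum.elim y (fun _ : Fin 1 => t) (finSumFinEquiv.symm j)) ∈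
            {v : Fin (n + 1) → M | ∀ j, v j ∈ Ioo (p j) (q j)} := by
          intro j
          rcases h : finSumFinEquiv.symm j with j' | j''
          · have hj : finSumFinEquiv (Sum.inl j') = j := by
              rw [← h]; exact finSumFinEquiv.apply_symm_apply j
            simp only [h, Sum.elim_inl]
            rw [← hj]
            exact hy j'
          · have hj : finSumFinEquiv (Sum.inr j'') = j := by
              rw [← h]; exact finSumFinEquiv.apply_symm_apply j
            simp only [h, Sum.elim_inr]
            rw [← hj, Subsingleton.elim j'' 0]
            exact ht
        have hXmem := hbox hmem
        rw [mem_setOf_eq] at hXmem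
        show insF (Sum.elim x y) t ∈ X'
        rw [hX'def, mem_subSet, hcomp]
        exact hXmem
      have hopen : IsOpen {y : Fin n → M | ∀ i, y i ∈ Ioo (pL i) (qL i)} :=
        box_isOpen pL qL
      obtain ⟨y0, hy0⟩ := box_nonempty (fun i => hpq (finSumFinEquiv (Sum.inl i)))
      exact ⟨y0, (interior_maximal hboxsub hopen) hy0⟩
    have hTS : (interior {x : ι → M |
        (interior {y : Fin n → M | Sum.elim x y ∈ T}).Nonempty}).Nonempty := by
      obtain ⟨x, hx⟩ := hS
      exact ⟨x, interior_mono hSsub hx⟩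
    have hTint : (interior T).Nonempty := IH T hTdef hTS
    -- apply the one-variable lemma to X'
    have hX'S : (interior {z : (ι ⊕ Fin n) → M |
        (interior (fibF X' z)).Nonempty}).Nonempty := by
      have : T = {z : (ι ⊕ Fin n) → M | (interior (fibF X' z)).Nonempty} := by
        ext z; exact hTmem z
      rwa [this] at hTint
    have hX'int : (interior X').Nonempty := lemma_one hlt hlo hdc hb hc X' hX' hX'S
    -- transfer back through the homeomorphism
    obtain ⟨v0, hv0⟩ := hX'int
    have hXeq : X' = (compHomeo M J.symm) ⁻¹' X := rfl
    rw [hXeq, ← Homeomorph.preimage_interior] at hv0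
    exact ⟨compHomeo M J.symm v0, hv0⟩

end KEY

theorem stmt3 (hlt : OrderDefinable L M) (hlo : IsLocallyOMinimal L M)
    (hdc : IsDefinablyComplete L M) (hb : PropertyB L M) (hc : PropertyC L M)
    (m n : ℕ) (X : Set ((Fin m ⊕ Fin n) → M)) (hX : (univ : Set M).Definable L X)
    (hS : (interior {x : Fin m → M |
        (interior {y : Fin n → M | Sum.elim x y ∈ X}).Nonempty}).Nonempty) :
    (interior X).Nonempty :=
  key_lemma hlt hlo hdc hb hc n X hX hS
end

section
/- Let M = (M, <, ...) be a definably complete locally o-minimal structure. If M enjoys property (c), then M enjoys property (b). -/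
open FirstOrder Set

variable (L : FirstOrder.Language) (M : Type*) [L.Structure M] [Nonempty M] [LinearOrder M]
  [DenselyOrdered M] [NoMinOrder M] [NoMaxOrder M] [TopologicalSpace M] [OrderTopology M]

lemma def_eq_const (L : FirstOrder.Language) (M : Type*) [L.Structure M] {β : Type}
    (i : β) (c : M) :
    (univ : Set M).Definable L {p : β → M | p i = c} := by
  refine ⟨Language.Term.equal (Language.Term.var i) ((L.con ⟨c, mem_univ c⟩).term), ?_⟩
  ext p
  simp [Language.Term.equal, Language.Formula.Realize, Language.Term.bdEqual,
    Language.BoundedFormula.Realize, Language.Term.realize, Language.coe_con,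
    Language.funMap_eq_coe_constants]

theorem stmt5 (hlt : OrderDefinable L M) (hlo : IsLocallyOMinimal L M)
    (hdc : IsDefinablyComplete L M) (hc : PropertyC L M) : PropertyB L M := by
  classical
  intro m X₁ X₂ hX₁ hX₂ hint
  obtain ⟨c⟩ := (inferInstance : Nonempty M)
  obtain ⟨d, hcd⟩ := exists_gt c
  set f : (Fin m → M) → (Fin 1 → M) := fun x => if x ∈ X₁ then (fun _ => c) else (fun _ => d)
    with hf
  have hA : (univ : Set M).Definable L (X₁ ∪ X₂) := hX₁.union hX₂
  have hgraph : DefinableMapOn L M (X₁ ∪ X₂) f := by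
    unfold DefinableMapOn
    have hS1 := hX₁.preimage_comp (Sum.inl : Fin m → Fin m ⊕ Fin 1)
    have hS2 := hX₂.preimage_comp (Sum.inl : Fin m → Fin m ⊕ Fin 1)
    have hEc := def_eq_const L M (Sum.inr 0 : Fin m ⊕ Fin 1) c
    have hEd := def_eq_const L M (Sum.inr 0 : Fin m ⊕ Fin 1) d
    have hset : {p : Fin m ⊕ Fin 1 → M | (p ∘ Sum.inl) ∈ X₁ ∪ X₂ ∧ p ∘ Sum.inr = f (p ∘ Sum.inl)}
        = (((fun g : Fin m ⊕ Fin 1 → M => g ∘ Sum.inl) ⁻¹' X₁) ∩ {p | p (Sum.inr 0) = c}) ∪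
          ((((fun g : Fin m ⊕ Fin 1 → M => g ∘ Sum.inl) ⁻¹' X₂) \
            ((fun g : Fin m ⊕ Fin 1 → M => g ∘ Sum.inl) ⁻¹' X₁)) ∩ {p | p (Sum.inr 0) = d}) := by
      ext p
      by_cases hp : p ∘ Sum.inl ∈ X₁
      · simp only [hf, mem_setOf_eq, hp, if_pos, mem_union, mem_inter_iff, mem_preimage,
          mem_diff, funext_iff, Fin.forall_fin_one, Function.comp_apply]
        tauto
      · simp only [hf, mem_setOf_eq, hp, if_neg, not_false_iff, mem_union, mem_inter_iff,
          mem_preimage, mem_diff, funext_iff, Fin.forall_fin_one, Function.comp_apply]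
        tauto
    rw [hset]
    exact ((hS1.inter hEc).union ((hS2.sdiff hS1).inter hEd))
  obtain ⟨U, hUdef, hUopen, hUne, hUsub, hUcont⟩ := hc m 1 (X₁ ∪ X₂) f hA hint hgraph
  have hcont0 : ContinuousOn (fun x => f x 0) U :=
    (continuous_apply (0 : Fin 1)).comp_continuousOn hUcont
  by_cases hUX1 : (U ∩ X₁).Nonempty
  · left
    have heq : U ∩ X₁ = U ∩ (fun x => f x 0) ⁻¹' (Set.Iio d) := by
      ext x
      by_cases hx : x ∈ X₁ <;> simp [hf, hx, hcd]
    have hopen : IsOpen (U ∩ X₁) := by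
      rw [heq]
      exact hcont0.isOpen_inter_preimage hUopen isOpen_Iio
    obtain ⟨x, hx⟩ := hUX1
    exact ⟨x, interior_maximal inter_subset_right hopen hx⟩
  · right
    have hsub : U ⊆ X₂ := fun y hy =>
      (hUsub hy).resolve_left fun h1 => hUX1 ⟨y, hy, h1⟩
    obtain ⟨x, hx⟩ := hUne
    exact ⟨x, interior_maximal hsub hUopen hx⟩
end

section
/- Let M = (M, <, ...) be a definably complete locally o-minimal structure. If M enjoys property (a), then M enjoys property (d): for every definable X ⊆ M^n and every coordinate projection π: M^n → M^d such that the fiber X ∩ π^{-1}(x) is discrete for every x ∈ π(X), there exists a definable map τ: π(X) → X with π(τ(x)) = x for all x ∈ π(X). -/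
open FirstOrder Set

variable (L : FirstOrder.Language) (M : Type*) [L.Structure M] [Nonempty M] [LinearOrder M]
  [DenselyOrdered M] [NoMinOrder M] [NoMaxOrder M] [TopologicalSpace M] [OrderTopology M]

set_option linter.unusedSectionVars false
section Comb
open FirstOrder.Language

section Combinators
variable {L : FirstOrder.Language} {M : Type*} [L.Structure M]

lemma definable_slice {α β : Type*} {s : Set (α ⊕ β → M)}
    (hs : (univ : Set M).Definable L s) (b : β → M) :
    (univ : Set M).Definable L {f : α → M | Sum.elim f b ∈ s} := by
  obtain ⟨φ, rfl⟩ := hs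
  refine ⟨φ.subst (Sum.elim (fun i => Term.var i)
    (fun j => (L.con (⟨b j, mem_univ _⟩ : (univ : Set M))).term)), ?_⟩
  ext f
  have hv : (fun a => Term.realize f (Sum.elim (fun i => Term.var i)
      (fun j => (L.con (⟨b j, mem_univ _⟩ : (univ : Set M))).term) a)) = Sum.elim f b := by
    funext a
    cases a <;> simp [Term.realize_constants]
  simp only [mem_setOf_eq, Formula.Realize, BoundedFormula.realize_subst, hv]

lemma d_exists {α β : Type*} [Finite α] [Finite β] {s : Set (α ⊕ β → M)}
    (hs : (univ : Set M).Definable L s) :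
    (univ : Set M).Definable L {f : α → M | ∃ g : β → M, Sum.elim f g ∈ s} := by
  have := hs.image_comp Sum.inl
  convert this using 1
  ext f
  constructor
  · rintro ⟨g, hg⟩
    exact ⟨Sum.elim f g, hg, by ext i; rfl⟩
  · rintro ⟨h, hh, rfl⟩
    exact ⟨h ∘ Sum.inr, by rwa [Sum.elim_comp_inl_inr]⟩

lemma d_forall {α β : Type*} [Finite α] [Finite β] {s : Set (α ⊕ β → M)}
    (hs : (univ : Set M).Definable L s) :
    (univ : Set M).Definable L {f : α → M | ∀ g : β → M, Sum.elim f g ∈ s} := by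
  have := (d_exists hs.compl).compl
  convert this using 1
  ext f
  simp [not_exists]

end Combinators

section Order
variable {L : FirstOrder.Language} {M : Type*} [L.Structure M] [LinearOrder M]

lemma d_lt (hlt : (univ : Set M).Definable L {p : Fin 2 → M | p 0 < p 1})
    {α : Type*} (i j : α) :
    (univ : Set M).Definable L {g : α → M | g i < g j} := by
  have := hlt.preimage_comp (![i, j] : Fin 2 → α)
  convert this using 1
  ext g; simp

lemma d_eq (hlt : (univ : Set M).Definable L {p : Fin 2 → M | p 0 < p 1})
    {α : Type*} (i j : α) :
    (univ : Set M).Definable L {g : α → M | g i = g j} := by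
  have := ((d_lt hlt i j).union (d_lt hlt j i)).compl
  convert this using 1
  ext g
  simp [mem_setOf_eq, not_or, le_antisymm_iff, not_lt, and_comm]

lemma d_ltc (hlt : (univ : Set M).Definable L {p : Fin 2 → M | p 0 < p 1})
    {α : Type*} (i : α) (c : M) :
    (univ : Set M).Definable L {g : α → M | g i < c} :=
  definable_slice (β := Fin 1)
    (d_lt hlt (Sum.inl i) (Sum.inr 0)) (fun _ => c)

lemma d_gtc (hlt : (univ : Set M).Definable L {p : Fin 2 → M | p 0 < p 1})
    {α : Type*} (i : α) (c : M) :
    (univ : Set M).Definable L {g : α → M | c < g i} :=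
  definable_slice (β := Fin 1)
    (d_lt hlt (Sum.inr 0) (Sum.inl i)) (fun _ => c)

lemma d_eqc (hlt : (univ : Set M).Definable L {p : Fin 2 → M | p 0 < p 1})
    {α : Type*} (i : α) (c : M) :
    (univ : Set M).Definable L {g : α → M | g i = c} := by
  have := ((d_ltc hlt i c).union (d_gtc hlt i c)).compl
  convert this using 1
  ext g
  simp [mem_setOf_eq, not_or, le_antisymm_iff, not_lt, and_comm]


end Order
end Comb
section AuxOrd
open FirstOrder.Language

variable {L : FirstOrder.Language} {M : Type*} [L.Structure M] [Nonempty M] [LinearOrder M]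
  [DenselyOrdered M] [NoMinOrder M] [NoMaxOrder M] [TopologicalSpace M] [OrderTopology M]

/-- An isolated point of a discrete set has a punctured interval neighborhood. -/
lemma DiscreteIn.exists_Ioo {Y : Set M} (hd : DiscreteIn Y) {z : M} (hz : z ∈ Y) :
    ∃ u₁ u₂ : M, u₁ < z ∧ z < u₂ ∧ Set.Ioo u₁ u₂ ∩ Y ⊆ {z} := by
  obtain ⟨U, hU, hUY⟩ := hd z hz
  have hzU : z ∈ U := by
    have : z ∈ U ∩ Y := hUY ▸ rfl
    exact this.1
  obtain ⟨l, u, hlu, hsub⟩ := mem_nhds_iff_exists_Ioo_subset.1 (hU.mem_nhds hzU)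
  exact ⟨l, u, hlu.1, hlu.2, fun w ⟨hw1, hw2⟩ => hUY ▸ ⟨hsub hw1, hw2⟩⟩

lemma locFin (hlo : IsLocallyOMinimal L M) {Y : Set M}
    (hY : (Set.univ : Set M).Definable₁ L Y) (hd : DiscreteIn Y) (a : M) :
    ∃ b c : M, b < a ∧ a < c ∧ (Y ∩ Set.Ioo b c).Finite := by
  obtain ⟨b, c, hb, hc, P, I, hPI⟩ := hlo Y hY a
  refine ⟨b, c, hb, hc, ?_⟩
  refine Set.Finite.subset P.finite_toSet ?_
  intro y hy
  rw [hPI] at hy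
  rcases hy with hy | hy
  · exact hy
  · exfalso
    simp only [Set.mem_iUnion] at hy
    obtain ⟨p, hpI, hyp⟩ := hy
    -- the interval `Ioo p.1 p.2` is contained in `Y`, contradicting discreteness
    have hsubY : Set.Ioo p.1 p.2 ⊆ Y := by
      intro w hw
      have : w ∈ Y ∩ Set.Ioo b c := by
        rw [hPI]
        exact Or.inr (Set.mem_iUnion.2 ⟨p, Set.mem_iUnion.2 ⟨hpI, hw⟩⟩)
      exact this.1
    obtain ⟨u₁, u₂, hu₁, hu₂, hiso⟩ := (hd.exists_Ioo (hsubY hyp))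
    set z := y with hz
    obtain ⟨w, hw1, hw2⟩ := exists_between (show max p.1 u₁ < z from max_lt hyp.1 hu₁)
    have hwz : w ≠ z := ne_of_lt hw2
    apply hwz
    have hwY : w ∈ Y := hsubY ⟨lt_of_le_of_lt (le_max_left _ _) hw1, lt_trans hw2 hyp.2⟩
    exact hiso ⟨⟨lt_of_le_of_lt (le_max_right _ _) hw1, lt_trans hw2 hu₂⟩, hwY⟩

end AuxOrd
set_option linter.unusedSectionVars false

section AuxPick
open FirstOrder.Language

variable {L : FirstOrder.Language} {M : Type*} [L.Structure M] [Nonempty M] [LinearOrder M]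
  [DenselyOrdered M] [NoMinOrder M] [NoMaxOrder M] [TopologicalSpace M] [OrderTopology M]

lemma def1_inter_Ici (hlt : OrderDefinable L M) {Y : Set M}
    (hY : (Set.univ : Set M).Definable₁ L Y) (c : M) :
    (Set.univ : Set M).Definable₁ L (Y ∩ Set.Ici c) := by
  have h := hY.inter ((d_ltc hlt (0 : Fin 1) c).compl)
  have e : {x : Fin 1 → M | x 0 ∈ Y} ∩ {g : Fin 1 → M | g 0 < c}ᶜ
      = {x : Fin 1 → M | x 0 ∈ Y ∩ Set.Ici c} := by
    ext h
    simp [Set.mem_Ici, not_lt]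
  rw [e] at h
  exact h

lemma def1_inter_Iio (hlt : OrderDefinable L M) {Y : Set M}
    (hY : (Set.univ : Set M).Definable₁ L Y) (c : M) :
    (Set.univ : Set M).Definable₁ L (Y ∩ Set.Iio c) := by
  have h := hY.inter (d_ltc hlt (0 : Fin 1) c)
  have e : {x : Fin 1 → M | x 0 ∈ Y} ∩ {g : Fin 1 → M | g 0 < c}
      = {x : Fin 1 → M | x 0 ∈ Y ∩ Set.Iio c} := by
    ext h
    simp [Set.mem_Iio]
  rw [e] at h
  exact h

lemma exists_least (hlo : IsLocallyOMinimal L M) (hdc : IsDefinablyComplete L M)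
    (hlt : OrderDefinable L M) {Y : Set M} (hY : (Set.univ : Set M).Definable₁ L Y)
    (hd : DiscreteIn Y) {c : M} (hne : (Y ∩ Set.Ici c).Nonempty) :
    ∃ m, IsLeast (Y ∩ Set.Ici c) m := by
  set S := Y ∩ Set.Ici c with hS
  have hSdef : (Set.univ : Set M).Definable₁ L S := def1_inter_Ici hlt hY c
  have hbdd : BddBelow S := ⟨c, fun s hs => hs.2⟩
  obtain ⟨a, ha⟩ := ((hdc S hSdef hne).2) hbdd
  obtain ⟨b, c', hb, hc', hfin⟩ := locFin hlo hY hd a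
  -- there is `s ∈ S` with `s < c'`
  have hexs : ∃ s ∈ S, s < c' := by
    by_contra h
    push_neg at h
    have : c' ≤ a := ha.2 (fun s hs => h s hs)
    exact absurd hc' (not_lt.2 this)
  obtain ⟨s, hsS, hsc⟩ := hexs
  have hFsub : S ∩ Set.Ioo b c' ⊆ Y ∩ Set.Ioo b c' := fun y hy => ⟨hy.1.1, hy.2⟩
  have hFfin : (S ∩ Set.Ioo b c').Finite := hfin.subset hFsub
  have hFne : (S ∩ Set.Ioo b c').Nonempty :=
    ⟨s, hsS, lt_of_lt_of_le hb (ha.1 hsS), hsc⟩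
  obtain ⟨m, hmF, hmin⟩ := Set.exists_min_image _ id hFfin hFne
  refine ⟨m, hmF.1, fun t ht => ?_⟩
  by_cases htc : t < c'
  · exact hmin t ⟨ht, lt_of_lt_of_le hb (ha.1 ht), htc⟩
  · exact le_trans (le_of_lt hmF.2.2) (not_lt.1 htc)

lemma exists_greatest (hlo : IsLocallyOMinimal L M) (hdc : IsDefinablyComplete L M)
    (hlt : OrderDefinable L M) {Y : Set M} (hY : (Set.univ : Set M).Definable₁ L Y)
    (hd : DiscreteIn Y) {c : M} (hne : (Y ∩ Set.Iio c).Nonempty) :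
    ∃ m, IsGreatest (Y ∩ Set.Iio c) m := by
  set S := Y ∩ Set.Iio c with hS
  have hSdef : (Set.univ : Set M).Definable₁ L S := def1_inter_Iio hlt hY c
  have hbdd : BddAbove S := ⟨c, fun s hs => le_of_lt hs.2⟩
  obtain ⟨a, ha⟩ := ((hdc S hSdef hne).1) hbdd
  obtain ⟨b, c', hb, hc', hfin⟩ := locFin hlo hY hd a
  have hexs : ∃ s ∈ S, b < s := by
    by_contra h
    push_neg at h
    have : a ≤ b := ha.2 (fun s hs => h s hs)
    exact absurd hb (not_lt.2 this)
  obtain ⟨s, hsS, hsb⟩ := hexs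
  have hFfin : (S ∩ Set.Ioo b c').Finite :=
    hfin.subset (fun y hy => ⟨hy.1.1, hy.2⟩)
  have hFne : (S ∩ Set.Ioo b c').Nonempty :=
    ⟨s, hsS, hsb, lt_of_le_of_lt (ha.1 hsS) hc'⟩
  obtain ⟨m, hmF, hmax⟩ := Set.exists_max_image _ id hFfin hFne
  refine ⟨m, hmF.1, fun t ht => ?_⟩
  by_cases htb : b < t
  · exact hmax t ⟨ht, htb, lt_of_le_of_lt (ha.1 ht) hc'⟩
  · exact le_trans (not_lt.1 htb) (le_of_lt hmF.2.1)

/-- The specification of the definable choice of a point from a definable discrete set. -/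
def PickSpec (c : M) (Y : Set M) (m : M) : Prop :=
  m ∈ Y ∧ ((c ≤ m ∧ ∀ z ∈ Y, c ≤ z → m ≤ z) ∨
    (m < c ∧ (∀ z ∈ Y, z < c) ∧ ∀ z ∈ Y, z ≤ m))

lemma pickSpec_unique {c : M} {Y : Set M} {m m' : M}
    (h : PickSpec c Y m) (h' : PickSpec c Y m') : m = m' := by
  obtain ⟨hm, h⟩ := h
  obtain ⟨hm', h'⟩ := h'
  rcases h with ⟨h1, h2⟩ | ⟨h1, h2, h3⟩ <;> rcases h' with ⟨h1', h2'⟩ | ⟨h1', h2', h3'⟩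
  · exact le_antisymm (h2 m' hm' h1') (h2' m hm h1)
  · exact absurd (h2' m hm) (not_lt.2 h1)
  · exact absurd (h2 m' hm') (not_lt.2 h1')
  · exact le_antisymm (h3' m hm) (h3 m' hm')

lemma exists_pickSpec (hlo : IsLocallyOMinimal L M) (hdc : IsDefinablyComplete L M)
    (hlt : OrderDefinable L M) {Y : Set M} (hY : (Set.univ : Set M).Definable₁ L Y)
    (hd : DiscreteIn Y) (hne : Y.Nonempty) (c : M) : ∃ m, PickSpec c Y m := by
  by_cases h : (Y ∩ Set.Ici c).Nonempty
  · obtain ⟨m, hm⟩ := exists_least hlo hdc hlt hY hd h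
    exact ⟨m, hm.1.1, Or.inl ⟨hm.1.2, fun z hz hcz => hm.2 ⟨hz, hcz⟩⟩⟩
  · have hall : ∀ z ∈ Y, z < c := by
      intro z hz
      by_contra hzc
      exact h ⟨z, hz, not_lt.1 hzc⟩
    have hne' : (Y ∩ Set.Iio c).Nonempty := by
      obtain ⟨y, hy⟩ := hne
      exact ⟨y, hy, hall y hy⟩
    obtain ⟨m, hm⟩ := exists_greatest hlo hdc hlt hY hd hne'
    exact ⟨m, hm.1.1, Or.inr ⟨hm.1.2, hall, fun z hz => hm.2 ⟨hz, hall z hz⟩⟩⟩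

end AuxPick
section AuxMain
open FirstOrder.Language

lemma DiscreteIn.mono {α : Type*} [TopologicalSpace α] {S T : Set α}
    (hS : DiscreteIn S) (hT : T ⊆ S) : DiscreteIn T := by
  intro x hx
  obtain ⟨U, hU, hUS⟩ := hS x (hT hx)
  refine ⟨U, hU, ?_⟩
  have hxU : x ∈ U := by
    have h0 : x ∈ U ∩ S := by rw [hUS]; rfl
    exact h0.1
  ext y
  constructor
  · rintro ⟨h1, h2⟩
    have : y ∈ U ∩ S := ⟨h1, hT h2⟩
    rw [hUS] at this
    exact this
  · intro h
    rw [Set.mem_singleton_iff] at h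
    subst h
    exact ⟨hxU, hx⟩

lemma discreteIn_unpack {M' : Type*} [TopologicalSpace M'] {T : Set (Fin 1 → M')}
    (hd : DiscreteIn T) : DiscreteIn {m : M' | (fun _ : Fin 1 => m) ∈ T} := by
  intro m hm
  obtain ⟨U, hU, hUT⟩ := hd _ hm
  refine ⟨(fun m' => fun _ : Fin 1 => m') ⁻¹' U, (hU.preimage (by continuity)), ?_⟩
  ext m'
  constructor
  · rintro ⟨hm1, hm2⟩
    have : (fun _ : Fin 1 => m') ∈ U ∩ T := ⟨hm1, hm2⟩
    rw [hUT] at this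
    exact congrFun this 0
  · intro h
    rw [Set.mem_singleton_iff] at h
    subst h
    have : (fun _ : Fin 1 => m') ∈ U ∩ T := by rw [hUT]; rfl
    exact ⟨this.1, this.2⟩

variable {L : FirstOrder.Language} {M : Type*} [L.Structure M] [Nonempty M] [LinearOrder M]
  [DenselyOrdered M] [NoMinOrder M] [NoMaxOrder M] [TopologicalSpace M] [OrderTopology M]

lemma surj_case (hlt : OrderDefinable L M) {n d : ℕ} {X : Set (Fin n → M)}
    {σ : Fin d → Fin n} (hX : (Set.univ : Set M).Definable L X)
    (hinj : Function.Injective σ) (hsurj : Function.Surjective σ) :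
    ∃ τ : (Fin d → M) → (Fin n → M),
      DefinableMapOn L M ((fun v => v ∘ σ) '' X) τ ∧
      ∀ x ∈ (fun v => v ∘ σ) '' X, τ x ∈ X ∧ τ x ∘ σ = x := by
  set e := Equiv.ofBijective σ ⟨hinj, hsurj⟩ with he
  have hes : ∀ i, σ (e.symm i) = i := fun i => e.apply_symm_apply i
  have hse : ∀ i, e.symm (σ i) = i := fun i => e.symm_apply_apply i
  refine ⟨fun x => fun i => x (e.symm i), ?_, ?_⟩
  · have hπX := hX.image_comp σ
    have h1 := hπX.preimage_comp (Sum.inl : Fin d → Fin d ⊕ Fin n)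
    have h3 := Set.definable_biInter_finset
      (f := fun i : Fin n =>
        {p : Fin d ⊕ Fin n → M | p (Sum.inr i) = p (Sum.inl (e.symm i))})
      (fun i => d_eq hlt _ _) Finset.univ
    have := h1.inter h3
    unfold DefinableMapOn
    convert this using 1
    ext p
    simp only [Set.mem_inter_iff, Set.mem_setOf_eq, Set.mem_iInter, Finset.mem_univ,
      true_implies, Set.preimage_setOf_eq, funext_iff]
    rfl
  · rintro x ⟨v, hv, rfl⟩
    have hxv : (fun i => (v ∘ σ) (e.symm i)) = v := by
      funext i
      simp only [Function.comp_apply, hes]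
    constructor
    · show (fun i => (v ∘ σ) (e.symm i)) ∈ X
      rw [hxv]
      exact hv
    · funext i
      show (v ∘ σ) (e.symm (σ i)) = (v ∘ σ) i
      rw [hse]

end AuxMain
section AuxPickSet
open FirstOrder.Language

variable {L : FirstOrder.Language} {M : Type*} [L.Structure M] [Nonempty M] [LinearOrder M]
  [DenselyOrdered M] [NoMinOrder M] [NoMaxOrder M] [TopologicalSpace M] [OrderTopology M]

lemma pick_set (hlt : OrderDefinable L M) {d : ℕ} (c : M)
    {W : Set (Fin d ⊕ Fin 1 → M)} (hW : (Set.univ : Set M).Definable L W) :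
    ∃ P : Set (Fin d ⊕ Fin 1 → M), (Set.univ : Set M).Definable L P ∧
      ∀ (x : Fin d → M) (m : M),
        (Sum.elim x (fun _ : Fin 1 => m) ∈ P ↔
          PickSpec c {z : M | Sum.elim x (fun _ : Fin 1 => z) ∈ W} m) := by
  classical
  set f1 : Fin d ⊕ Fin 1 → (Fin d ⊕ Fin 1) ⊕ Fin 1 :=
    Sum.elim (fun i => Sum.inl (Sum.inl i)) Sum.inr with hf1
  set W' : Set ((Fin d ⊕ Fin 1) ⊕ Fin 1 → M) := {w | w ∘ f1 ∈ W} with hW'def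
  have hW' : (Set.univ : Set M).Definable L W' := hW.preimage_comp f1
  -- z-slot : Sum.inr 0 ; m-slot : Sum.inl (Sum.inr 0)
  set A1 : Set ((Fin d ⊕ Fin 1) ⊕ Fin 1 → M) :=
    (W' ∩ {w | w (Sum.inr 0) < c}ᶜ)ᶜ ∪
      {w | w (Sum.inr 0) < w (Sum.inl (Sum.inr 0))}ᶜ with hA1def
  set A2a : Set ((Fin d ⊕ Fin 1) ⊕ Fin 1 → M) :=
    W'ᶜ ∪ {w | w (Sum.inr 0) < c} with hA2adef
  set A2b : Set ((Fin d ⊕ Fin 1) ⊕ Fin 1 → M) :=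
    W'ᶜ ∪ {w | w (Sum.inl (Sum.inr 0)) < w (Sum.inr 0)}ᶜ with hA2bdef
  have hA1 : (Set.univ : Set M).Definable L A1 :=
    ((hW'.inter (d_ltc hlt _ c).compl).compl).union (d_lt hlt _ _).compl
  have hA2a : (Set.univ : Set M).Definable L A2a :=
    hW'.compl.union (d_ltc hlt _ c)
  have hA2b : (Set.univ : Set M).Definable L A2b :=
    hW'.compl.union (d_lt hlt _ _).compl
  set Q1 : Set (Fin d ⊕ Fin 1 → M) :=
    {u | ∀ g : Fin 1 → M, Sum.elim u g ∈ A1} with hQ1def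
  set Q2a : Set (Fin d ⊕ Fin 1 → M) :=
    {u | ∀ g : Fin 1 → M, Sum.elim u g ∈ A2a} with hQ2adef
  set Q2b : Set (Fin d ⊕ Fin 1 → M) :=
    {u | ∀ g : Fin 1 → M, Sum.elim u g ∈ A2b} with hQ2bdef
  refine ⟨W ∩ (({u | u (Sum.inr 0) < c}ᶜ ∩ Q1) ∪
      (({u | u (Sum.inr 0) < c} ∩ Q2a) ∩ Q2b)), ?_, ?_⟩
  · exact hW.inter ((((d_ltc hlt _ c).compl).inter (d_forall hA1)).union
      ((((d_ltc hlt _ c)).inter (d_forall hA2a)).inter (d_forall hA2b)))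
  · intro x m
    set u : Fin d ⊕ Fin 1 → M := Sum.elim x (fun _ : Fin 1 => m) with hu
    have helim : ∀ (g : Fin 1 → M), (Sum.elim u g) ∘ f1 = Sum.elim x g := by
      intro g
      funext s
      cases s with
      | inl i => rfl
      | inr k => rfl
    have hWmem : ∀ (g : Fin 1 → M), (Sum.elim u g ∈ W') ↔
        (g 0 ∈ {z : M | Sum.elim x (fun _ : Fin 1 => z) ∈ W}) := by
      intro g
      have hg : (fun _ : Fin 1 => g 0) = g := funext fun k => by
        rw [Subsingleton.elim k (0 : Fin 1)]
      rw [hW'def]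
      simp only [Set.mem_setOf_eq, helim g, hg]
    have hzval : ∀ (g : Fin 1 → M), (Sum.elim u g) (Sum.inr 0) = g 0 := fun _ => rfl
    have hmval : ∀ (g : Fin 1 → M), (Sum.elim u g) (Sum.inl (Sum.inr 0)) = m := fun _ => rfl
    constructor
    · rintro ⟨huW, hcase⟩
      refine ⟨huW, ?_⟩
      rcases hcase with ⟨h1, h2⟩ | ⟨⟨h1, h2a⟩, h2b⟩
      · left
        rw [Set.mem_compl_iff, Set.mem_setOf_eq] at h1
        refine ⟨not_lt.1 h1, ?_⟩
        intro z hz hcz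
        have h3 := h2 (fun _ : Fin 1 => z)
        rw [hA1def] at h3
        rcases h3 with h3 | h3
        · exfalso
          apply h3
          exact ⟨(hWmem _).2 hz, by simpa using not_lt.2 hcz⟩
        · simpa using not_lt.1 (by simpa [hu] using h3)
      · right
        rw [Set.mem_setOf_eq] at h1
        refine ⟨h1, ?_, ?_⟩
        · intro z hz
          have h3 := h2a (fun _ : Fin 1 => z)
          rw [hA2adef] at h3
          rcases h3 with h3 | h3
          · exact absurd ((hWmem _).2 hz) (by simpa using h3)
          · simpa using h3
        · intro z hz
          have h3 := h2b (fun _ : Fin 1 => z)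
          rw [hA2bdef] at h3
          rcases h3 with h3 | h3
          · exact absurd ((hWmem _).2 hz) (by simpa using h3)
          · exact not_lt.1 (by simpa [hu] using h3)
    · rintro ⟨hm, hcase⟩
      refine ⟨hm, ?_⟩
      rcases hcase with ⟨h1, h2⟩ | ⟨h1, h2, h3⟩
      · left
        constructor
        · simpa [hu] using not_lt.2 h1
        · rw [hQ1def]
          intro g
          rw [hA1def]
          by_cases hgW : Sum.elim u g ∈ W' ∧ ¬ (Sum.elim u g) (Sum.inr 0) < c
          · right
            have hzY := (hWmem g).1 hgW.1
            have hcz : c ≤ g 0 := not_lt.1 (by simpa using hgW.2)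
            simpa [hu] using not_lt.2 (h2 (g 0) hzY hcz)
          · left
            simpa [Set.mem_inter_iff, Set.mem_compl_iff] using hgW
      · right
        refine ⟨⟨by simpa [hu] using h1, ?_⟩, ?_⟩
        · rw [hQ2adef]
          intro g
          rw [hA2adef]
          by_cases hgW : Sum.elim u g ∈ W'
          · right
            simpa using h2 (g 0) ((hWmem g).1 hgW)
          · left
            simpa using hgW
        · rw [hQ2bdef]
          intro g
          rw [hA2bdef]
          by_cases hgW : Sum.elim u g ∈ W'
          · right
            simpa [hu] using not_lt.2 (h3 (g 0) ((hWmem g).1 hgW))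
          · left
            simpa using hgW
end AuxPickSet
section AuxGraph
open FirstOrder.Language

variable {L : FirstOrder.Language} {M : Type*} [L.Structure M] [Nonempty M] [LinearOrder M]
  [DenselyOrdered M] [NoMinOrder M] [NoMaxOrder M] [TopologicalSpace M] [OrderTopology M]

lemma graph_def {d n : ℕ} {P : Set (Fin d ⊕ Fin 1 → M)}
    {Γ' : Set (Fin (d + 1) ⊕ Fin n → M)}
    (hP : (Set.univ : Set M).Definable L P)
    (hΓ' : (Set.univ : Set M).Definable L Γ') :
    (Set.univ : Set M).Definable L
      {p : Fin d ⊕ Fin n → M | ∃ m : M,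
        Sum.elim (p ∘ Sum.inl) (fun _ : Fin 1 => m) ∈ P ∧
        Sum.elim (Fin.snoc (p ∘ Sum.inl) m) (p ∘ Sum.inr) ∈ Γ'} := by
  classical
  set f2 : Fin d ⊕ Fin 1 → (Fin d ⊕ Fin n) ⊕ Fin 1 :=
    Sum.elim (fun i => Sum.inl (Sum.inl i)) Sum.inr with hf2
  set f3 : Fin (d + 1) ⊕ Fin n → (Fin d ⊕ Fin n) ⊕ Fin 1 :=
    Sum.elim (Fin.snoc (fun i => Sum.inl (Sum.inl i)) (Sum.inr 0))
      (fun k => Sum.inl (Sum.inr k)) with hf3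
  have hH := (hP.preimage_comp f2).inter (hΓ'.preimage_comp f3)
  have hE := d_exists (α := Fin d ⊕ Fin n) (β := Fin 1) hH
  convert hE using 1
  ext p
  have hid2 : ∀ g : Fin 1 → M, (Sum.elim p g) ∘ f2 = Sum.elim (p ∘ Sum.inl) g := by
    intro g
    funext s
    cases s with
    | inl i => rfl
    | inr k => rfl
  have hid3 : ∀ g : Fin 1 → M,
      (Sum.elim p g) ∘ f3 = Sum.elim (Fin.snoc (p ∘ Sum.inl) (g 0)) (p ∘ Sum.inr) := by
    intro g
    funext s
    cases s with
    | inl i =>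
      refine Fin.lastCases ?_ ?_ i
      · show Sum.elim p g (f3 (Sum.inl (Fin.last d))) = _
        rw [hf3]
        simp [Fin.snoc_last]
      · intro k
        show Sum.elim p g (f3 (Sum.inl (Fin.castSucc k))) = _
        rw [hf3]
        simp [Fin.snoc_castSucc]
    | inr k => rfl
  simp only [Set.mem_setOf_eq, Set.mem_inter_iff]
  constructor
  · rintro ⟨m, h1, h2⟩
    refine ⟨fun _ : Fin 1 => m, ?_, ?_⟩
    · show (Sum.elim p fun _ : Fin 1 => m) ∘ f2 ∈ P
      rw [hid2]
      exact h1
    · show (Sum.elim p fun _ : Fin 1 => m) ∘ f3 ∈ Γ'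
      rw [hid3]
      exact h2
  · rintro ⟨g, h1, h2⟩
    rw [Set.mem_preimage] at h1 h2
    refine ⟨g 0, ?_, ?_⟩
    · rw [hid2] at h1
      have hg : g = (fun _ : Fin 1 => g 0) := funext fun k => by
        rw [Subsingleton.elim k (0 : Fin 1)]
      rwa [hg] at h1
    · rw [hid3] at h2
      exact h2

end AuxGraph
section AuxIndMain
open FirstOrder.Language

variable {L : FirstOrder.Language} {M : Type*} [L.Structure M] [Nonempty M] [LinearOrder M]
  [DenselyOrdered M] [NoMinOrder M] [NoMaxOrder M] [TopologicalSpace M] [OrderTopology M]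

lemma aux_ind (hlt : OrderDefinable L M) (hlo : IsLocallyOMinimal L M)
    (hdc : IsDefinablyComplete L M) (ha : PropertyA L M) (k : ℕ) :
    ∀ (n d : ℕ) (X : Set (Fin n → M)) (σ : Fin d → Fin n),
      Function.Injective σ → (Set.univ : Set M).Definable L X →
      (∀ x ∈ (fun v => v ∘ σ) '' X, DiscreteIn (X ∩ (fun v => v ∘ σ) ⁻¹' {x})) →
      n - d ≤ k →
      ∃ τ : (Fin d → M) → (Fin n → M),
        DefinableMapOn L M ((fun v => v ∘ σ) '' X) τ ∧
        ∀ x ∈ (fun v => v ∘ σ) '' X, τ x ∈ X ∧ τ x ∘ σ = x := by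
  induction k with
  | zero =>
    intro n d X σ hinj hX hfib hk
    have hdn : d ≤ n := by simpa using Fintype.card_le_of_injective σ hinj
    have hsurj : Function.Surjective σ :=
      ((Fintype.bijective_iff_injective_and_card σ).2
        ⟨hinj, by simpa using (by omega : d = n)⟩).2
    exact surj_case hlt hX hinj hsurj
  | succ k IH =>
    intro n d X σ hinj hX hfib hk
    by_cases hsurj : Function.Surjective σ
    · exact surj_case hlt hX hinj hsurj
    · rw [Function.Surjective] at hsurj
      push_neg at hsurj
      obtain ⟨j, hj⟩ := hsurj
      classical
      set σ' : Fin (d + 1) → Fin n := Fin.snoc σ j with hσ'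
      have hσ'c : ∀ i : Fin d, σ' (Fin.castSucc i) = σ i := fun i => Fin.snoc_castSucc ..
      have hσ'l : σ' (Fin.last d) = j := Fin.snoc_last ..
      have hinj' : Function.Injective σ' := by
        intro a b hab
        induction a using Fin.lastCases with
        | last =>
          induction b using Fin.lastCases with
          | last => rfl
          | cast b =>
            rw [hσ'l, hσ'c] at hab
            exact absurd hab.symm (hj b)
        | cast a =>
          induction b using Fin.lastCases with
          | last =>
            rw [hσ'l, hσ'c] at hab
            exact absurd hab (hj a)
          | cast b =>
            rw [hσ'c, hσ'c] at hab
            rw [hinj hab]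
      have hfib' : ∀ x' ∈ (fun v : Fin n → M => v ∘ σ') '' X,
          DiscreteIn (X ∩ (fun v => v ∘ σ') ⁻¹' {x'}) := by
        rintro x' ⟨v, hv, rfl⟩
        refine (hfib (v ∘ σ) ⟨v, hv, rfl⟩).mono ?_
        rintro w ⟨hw, hw2⟩
        rw [Set.mem_preimage, Set.mem_singleton_iff] at hw2
        refine ⟨hw, ?_⟩
        rw [Set.mem_preimage, Set.mem_singleton_iff]
        funext i
        simpa [hσ'c] using congrFun hw2 (Fin.castSucc i)
      obtain ⟨τ', hτ'def, hτ'mem⟩ := IH n (d + 1) X σ' hinj' hX hfib' (by omega)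
      set c : M := Classical.arbitrary M with hc
      set ρ : Fin d ⊕ Fin 1 → Fin n := Sum.elim σ (fun _ => j) with hρ
      set W : Set (Fin d ⊕ Fin 1 → M) := (fun v => v ∘ ρ) '' X with hWdef
      have hW : (Set.univ : Set M).Definable L W := hX.image_comp ρ
      set Y : (Fin d → M) → Set M :=
        fun x => {z | Sum.elim x (fun _ : Fin 1 => z) ∈ W} with hYdef0
      have hY1 : ∀ (x : Fin d → M) (z : M),
          z ∈ Y x ↔ ∃ v ∈ X, v ∘ σ = x ∧ v j = z := by
        intro x z
        rw [hYdef0]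
        simp only [Set.mem_setOf_eq, hWdef, Set.mem_image]
        constructor
        · rintro ⟨v, hv, hvz⟩
          exact ⟨v, hv, funext fun i => congrFun hvz (Sum.inl i),
            congrFun hvz (Sum.inr 0)⟩
        · rintro ⟨v, hv, h1, h2⟩
          refine ⟨v, hv, ?_⟩
          funext s
          cases s with
          | inl i => exact congrFun h1 i
          | inr k => exact h2
      have hY2 : ∀ x ∈ (fun v : Fin n → M => v ∘ σ) '' X, (Y x).Nonempty := by
        rintro x ⟨v, hv, rfl⟩
        exact ⟨v j, (hY1 _ _).2 ⟨v, hv, rfl, rfl⟩⟩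
      have hYdef : ∀ x : Fin d → M, (Set.univ : Set M).Definable₁ L (Y x) := by
        intro x
        have hW2 := hW.preimage_comp
          (Sum.elim Sum.inr Sum.inl : Fin d ⊕ Fin 1 → Fin 1 ⊕ Fin d)
        have hsl := definable_slice hW2 x
        show (Set.univ : Set M).Definable L {h : Fin 1 → M | h 0 ∈ Y x}
        have e : {h : Fin 1 → M | h 0 ∈ Y x}
            = {h : Fin 1 → M | Sum.elim h x ∈
                (fun g : Fin 1 ⊕ Fin d → M =>
                  g ∘ (Sum.elim Sum.inr Sum.inl : Fin d ⊕ Fin 1 → Fin 1 ⊕ Fin d)) ⁻¹' W} := by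
          ext h
          rw [hYdef0]
          simp only [Set.mem_setOf_eq, Set.mem_preimage]
          have hfe : (Sum.elim h x) ∘
              (Sum.elim Sum.inr Sum.inl : Fin d ⊕ Fin 1 → Fin 1 ⊕ Fin d)
              = Sum.elim x (fun _ : Fin 1 => h 0) := by
            funext s
            cases s with
            | inl i => rfl
            | inr k =>
              show h k = h 0
              rw [Subsingleton.elim k (0 : Fin 1)]
          rw [hfe]
        rw [e]
        exact hsl
      have hfibdef : ∀ x : Fin d → M,
          (Set.univ : Set M).Definable L (X ∩ (fun v => v ∘ σ) ⁻¹' {x}) := by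
        intro x
        have h2 := Set.definable_biInter_finset
          (f := fun i : Fin d => {v : Fin n → M | v (σ i) = x i})
          (fun i => d_eqc hlt _ _) Finset.univ
        have e : (⋂ i ∈ Finset.univ, {v : Fin n → M | v (σ i) = x i})
            = (fun v : Fin n → M => v ∘ σ) ⁻¹' {x} := by
          ext v
          simp only [Set.mem_iInter, Finset.mem_univ, true_implies, Set.mem_setOf_eq,
            Set.mem_preimage, Set.mem_singleton_iff, funext_iff]
          rfl
        rw [e] at h2
        exact hX.inter h2
      have hYdisc : ∀ x ∈ (fun v : Fin n → M => v ∘ σ) '' X, DiscreteIn (Y x) := by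
        intro x hx
        obtain ⟨v0, hv0, hv0x⟩ := hx
        have hne : (X ∩ (fun v => v ∘ σ) ⁻¹' {x}).Nonempty :=
          ⟨v0, hv0, by rw [Set.mem_preimage, Set.mem_singleton_iff]; exact hv0x⟩
        have hT := ha n 1 (X ∩ (fun v => v ∘ σ) ⁻¹' {x}) (fun _ : Fin 1 => j)
          (fun a b _ => Subsingleton.elim a b) (hfibdef x) hne (hfib x ⟨v0, hv0, hv0x⟩)
        have hT2 := discreteIn_unpack hT
        have e : {m : M | (fun _ : Fin 1 => m) ∈
            (fun v : Fin n → M => v ∘ (fun _ : Fin 1 => j)) ''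
              (X ∩ (fun v => v ∘ σ) ⁻¹' {x})} = Y x := by
          ext m
          simp only [Set.mem_setOf_eq, Set.mem_image, Set.mem_inter_iff, Set.mem_preimage,
            Set.mem_singleton_iff]
          constructor
          · rintro ⟨v, ⟨hv, hvx⟩, hvm⟩
            exact (hY1 x m).2 ⟨v, hv, hvx, congrFun hvm 0⟩
          · intro hm
            obtain ⟨v, hv, h1, h2⟩ := (hY1 x m).1 hm
            exact ⟨v, ⟨hv, h1⟩, funext fun k => h2⟩
        rw [← e]
        exact hT2
      obtain ⟨P, hPdef, hPkey⟩ := pick_set hlt c hW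
      have hex : ∀ x ∈ (fun v : Fin n → M => v ∘ σ) '' X, ∃ m, PickSpec c (Y x) m :=
        fun x hx => exists_pickSpec hlo hdc hlt (hYdef x) (hYdisc x hx) (hY2 x hx) c
      set pickv : (Fin d → M) → M := fun x =>
        if h : ∃ m, PickSpec c (Y x) m then h.choose else c with hpickv
      have hpick : ∀ x ∈ (fun v : Fin n → M => v ∘ σ) '' X, PickSpec c (Y x) (pickv x) := by
        intro x hx
        rw [hpickv]
        show PickSpec c (Y x) (dite _ _ _)
        rw [dif_pos (hex x hx)]
        exact (hex x hx).choose_spec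
      have hpick_eq : ∀ (x : Fin d → M) (m : M), PickSpec c (Y x) m → pickv x = m := by
        intro x m hm
        have hE : ∃ m', PickSpec c (Y x) m' := ⟨m, hm⟩
        rw [hpickv]
        show dite _ _ _ = m
        rw [dif_pos hE]
        exact pickSpec_unique hE.choose_spec hm
      have hsnoc : ∀ (x : Fin d → M) (m : M), m ∈ Y x →
          Fin.snoc x m ∈ (fun v : Fin n → M => v ∘ σ') '' X := by
        intro x m hm
        obtain ⟨v, hv, h1, h2⟩ := (hY1 x m).1 hm
        refine ⟨v, hv, ?_⟩
        funext i
        induction i using Fin.lastCases with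
        | last =>
          show v (σ' (Fin.last d)) = (Fin.snoc x m : Fin (d + 1) → M) (Fin.last d)
          rw [hσ'l, Fin.snoc_last]
          exact h2
        | cast i =>
          show v (σ' (Fin.castSucc i)) = (Fin.snoc x m : Fin (d + 1) → M) (Fin.castSucc i)
          rw [hσ'c, Fin.snoc_castSucc]
          exact congrFun h1 i
      refine ⟨fun x => τ' (Fin.snoc x (pickv x)), ?_, ?_⟩
      · show (Set.univ : Set M).Definable L
          {p : Fin d ⊕ Fin n → M | (p ∘ Sum.inl) ∈ ((fun v => v ∘ σ) '' X) ∧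
            p ∘ Sum.inr = (fun x => τ' (Fin.snoc x (pickv x))) (p ∘ Sum.inl)}
        have hΓ' : (Set.univ : Set M).Definable L
            {q : Fin (d + 1) ⊕ Fin n → M | (q ∘ Sum.inl) ∈ ((fun v => v ∘ σ') '' X) ∧
              q ∘ Sum.inr = τ' (q ∘ Sum.inl)} := hτ'def
        have hE := graph_def hPdef hΓ'
        have e : {p : Fin d ⊕ Fin n → M | (p ∘ Sum.inl) ∈ ((fun v => v ∘ σ) '' X) ∧
            p ∘ Sum.inr = (fun x => τ' (Fin.snoc x (pickv x))) (p ∘ Sum.inl)}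
            = {p : Fin d ⊕ Fin n → M | ∃ m : M,
                Sum.elim (p ∘ Sum.inl) (fun _ : Fin 1 => m) ∈ P ∧
                Sum.elim (Fin.snoc (p ∘ Sum.inl) m) (p ∘ Sum.inr) ∈
                  {q : Fin (d + 1) ⊕ Fin n → M |
                    (q ∘ Sum.inl) ∈ ((fun v => v ∘ σ') '' X) ∧
                    q ∘ Sum.inr = τ' (q ∘ Sum.inl)}} := by
          ext p
          simp only [Set.mem_setOf_eq]
          constructor
          · rintro ⟨hx, hv⟩
            refine ⟨pickv (p ∘ Sum.inl), (hPkey _ _).2 (hpick _ hx), ?_, ?_⟩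
            · exact hsnoc _ _ (hpick _ hx).1
            · exact hv
          · rintro ⟨m, h1, h2⟩
            have hps : PickSpec c (Y (p ∘ Sum.inl)) m := (hPkey _ _).1 h1
            obtain ⟨v, hv, hvx, hvj⟩ := (hY1 _ _).1 hps.1
            have hxmem : p ∘ Sum.inl ∈ (fun v : Fin n → M => v ∘ σ) '' X := ⟨v, hv, hvx⟩
            refine ⟨hxmem, ?_⟩
            have hpe : pickv (p ∘ Sum.inl) = m := hpick_eq _ _ hps
            have h2' : p ∘ Sum.inr = τ' (Fin.snoc (p ∘ Sum.inl) m) := h2.2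
            show p ∘ Sum.inr = τ' (Fin.snoc (p ∘ Sum.inl) (pickv (p ∘ Sum.inl)))
            rw [hpe]
            exact h2'
        rw [e]
        exact hE
      · intro x hx
        have hm := hpick x hx
        have hsm := hsnoc x (pickv x) hm.1
        obtain ⟨h1, h2⟩ := hτ'mem _ hsm
        refine ⟨h1, ?_⟩
        funext i
        have h3 := congrFun h2 (Fin.castSucc i)
        simpa [hσ'c, Fin.snoc_castSucc] using h3

end AuxIndMain
theorem stmt6 (hlt : OrderDefinable L M) (hlo : IsLocallyOMinimal L M)
    (hdc : IsDefinablyComplete L M) (ha : PropertyA L M) : PropertyD L M :=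
  fun n d X σ hinj hX hfib =>
    aux_ind hlt hlo hdc ha (n - d) n d X σ hinj hX hfib le_rfl
end
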